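/- arXiv:math/0606546 — 7 statements merged into one kernel-verified Lean document; each statement's English description precedes it below -/
import Mathlib

section
/- Let n be square-free with at least two prime factors, let p be a prime factor of n, write Z_n ≅ Z_p × H where H has order n/p, and suppose E ⊆ Z_n has empty intersection with some coset of H. Then E is quasi-independent (as a set of n-th roots of unity in ℂ) if and only if E ∩ (H + a) is quasi-independent for every a ∈ Z_p. -/
/-!
Write `n = p * m`; squarefreeness gives `p ∤ m`, so a primitive `n`-th root of unity factors as
`ξ * μ` with `ξ` a primitive `p`-th and `μ` a primitive `m`-th root, and
`zeta n z = ξ ^ (z mod p) * μ ^ z`. Grouping a vanishing signed sum of elements of `E` by cosets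
of `H` therefore gives a relation `∑ a, g a * ξ ^ a = 0` with all `g a ∈ ℚ(μ)`. As `p ∤ m`, the
cyclotomic polynomial `Φ_p` stays irreducible over `ℚ(μ)`, so the only such relation is
`g 0 = g 1 = ⋯ = g (p - 1)`. The coset missed by `E` has `g = 0`, so the sum over every coset
vanishes on its own, and quasi-independence of the pieces forces all coefficients to be `0`.
-/

def QuasiIndep (S : Set ℂ) : Prop :=
  ∀ (s : Finset ℂ) (ε : ℂ → ℤ), ↑s ⊆ S →
    (∀ z ∈ s, ε z = 0 ∨ ε z = 1 ∨ ε z = -1) →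
    (∑ z ∈ s, (ε z : ℂ) * z) = 0 → ∀ z ∈ s, ε z = 0

/-- The identification of `ZMod n` with the n-th roots of unity. -/
noncomputable def zeta (n : ℕ) (k : ZMod n) : ℂ :=
  Complex.exp (2 * Real.pi * Complex.I * k.val / n)

open Polynomial IntermediateField Module

theorem eq_of_sum_algebraMap_mul_pow_val_eq_zero {K L : Type*} [Field K] [Field L] [Algebra K L]
    {p : ℕ} [Fact p.Prime] {ξ : L} (hξ : minpoly K ξ = cyclotomic p K) {c : ZMod p → K}
    (hc : ∑ b, algebraMap K L (c b) * ξ ^ b.val = 0) (a b : ZMod p) : c a = c b := by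
  set G : K[X] := ∑ b : ZMod p, C (c b) * X ^ b.val
  have hcoeff (a : ZMod p) : G.coeff a.val = c a := by
    simp [G, coeff_X_pow, ZMod.val_injective _ |>.eq_iff]
  have hdvd : cyclotomic p K ∣ G := hξ ▸ minpoly.dvd K ξ (by simpa [G] using hc)
  have hdeg : G.natDegree ≤ (cyclotomic p K).natDegree := by
    rw [natDegree_cyclotomic, Nat.totient_prime Fact.out]
    exact natDegree_sum_le_of_forall_le _ _ fun b _ ↦
      (natDegree_C_mul_X_pow_le _ _).trans (Nat.le_sub_one_of_lt b.val_lt)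
  obtain ⟨c₀, hG⟩ : ∃ c₀, G = C c₀ * cyclotomic p K :=
    ⟨_, eq_leadingCoeff_mul_of_monic_of_dvd_of_natDegree_le (cyclotomic.monic p K) hdvd hdeg⟩
  have hconst (a : ZMod p) : c a = c₀ := by
    rw [← hcoeff, hG, coeff_C_mul, cyclotomic_prime, finsetSum_coeff]
    simp [coeff_X_pow, a.val_lt]
  rw [hconst a, hconst b]

theorem sum_filter_eq_zero_of_sum_eq_zero {K L : Type*} [Field K] [Field L] [Algebra K L]
    {p : ℕ} [Fact p.Prime] {ξ : L} (hξ : minpoly K ξ = cyclotomic p K) {ι : Type*}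
    {s : Finset ι} {f : ι → ZMod p} {c : ι → K}
    (hs : ∑ i ∈ s, algebraMap K L (c i) * ξ ^ (f i).val = 0) {a₀ : ZMod p}
    (ha₀ : ∀ i ∈ s, f i ≠ a₀) (a : ZMod p) :
    ∑ i ∈ s with f i = a, algebraMap K L (c i) * ξ ^ (f i).val = 0 := by
  set g : ZMod p → K := fun a ↦ ∑ i ∈ s with f i = a, c i
  have hfiber (a : ZMod p) : ∑ i ∈ s with f i = a, algebraMap K L (c i) * ξ ^ (f i).val =
      algebraMap K L (g a) * ξ ^ a.val := by
    rw [map_sum, Finset.sum_mul]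
    exact Finset.sum_congr rfl fun i hi ↦ by rw [(Finset.mem_filter.mp hi).2]
  have hg : ∑ b, algebraMap K L (g b) * ξ ^ b.val = 0 := by
    simp_rw [← hfiber]
    rwa [Finset.sum_fiberwise]
  have hg₀ : g a₀ = 0 := Finset.sum_eq_zero fun i hi ↦
    absurd (Finset.mem_filter.mp hi).2 (ha₀ i (Finset.mem_filter.mp hi).1)
  rw [hfiber, eq_of_sum_algebraMap_mul_pow_val_eq_zero hξ hg a a₀, hg₀, map_zero, zero_mul]

theorem IsPrimitiveRoot.exists_eq_mul_of_coprime {G₀ : Type*} [CommGroupWithZero G₀] {ζ : G₀}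
    {p m : ℕ} (h : IsPrimitiveRoot ζ (p * m)) (h₀ : p * m ≠ 0) (hpm : p.Coprime m) :
    ∃ ξ μ : G₀, IsPrimitiveRoot ξ p ∧ IsPrimitiveRoot μ m ∧ ζ = ξ * μ := by
  obtain ⟨u, v, huv⟩ := Nat.isCoprime_iff_coprime.mpr hpm
  refine ⟨(ζ ^ m) ^ v, (ζ ^ p) ^ u, ?_, ?_, ?_⟩
  · refine (h.pow h₀.bot_lt (mul_comm p m)).zpow_of_gcd_eq_one v ?_
    exact Int.isCoprime_iff_gcd_eq_one.mp ⟨m, u, by linear_combination huv⟩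
  · refine (h.pow h₀.bot_lt rfl).zpow_of_gcd_eq_one u ?_
    exact Int.isCoprime_iff_gcd_eq_one.mp ⟨p, v, by linear_combination huv⟩
  · rw [← zpow_natCast, ← zpow_natCast, ← zpow_mul, ← zpow_mul, ← zpow_add₀ (h.ne_zero h₀)]
    rw [show (m : ℤ) * v + p * u = 1 by linear_combination huv, zpow_one]

theorem IsPrimitiveRoot.finrank_adjoin_rat {L : Type*} [Field L] [CharZero L] {ζ : L} {n : ℕ}
    (h : IsPrimitiveRoot ζ n) (hn : n ≠ 0) : finrank ℚ ℚ⟮ζ⟯ = n.totient := by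
  rw [adjoin.finrank (h.isIntegral hn.bot_lt).tower_top,
    ← cyclotomic_eq_minpoly_rat h hn.bot_lt, natDegree_cyclotomic]

theorem IsPrimitiveRoot.minpoly_adjoin_eq_cyclotomic {L : Type*} [Field L] [CharZero L]
    {ξ μ : L} {d m : ℕ} (hξ : IsPrimitiveRoot ξ d) (hμ : IsPrimitiveRoot μ m) (hd : d ≠ 0)
    (hm : m ≠ 0) (hdm : d.Coprime m) : minpoly ℚ⟮μ⟯ ξ = cyclotomic d ℚ⟮μ⟯ := by
  set K := ℚ⟮μ⟯
  have hξK : IsIntegral K ξ := (hξ.isIntegral hd.bot_lt).tower_top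
  have hξμ : IsPrimitiveRoot (ξ * μ) (d * m) := by
    rw [IsPrimitiveRoot.iff_orderOf, (Commute.all ξ μ).orderOf_mul_eq_mul_orderOf_of_coprime,
      hξ.eq_orderOf, hμ.eq_orderOf]
    rwa [← hξ.eq_orderOf, ← hμ.eq_orderOf]
  have hdvd : minpoly K ξ ∣ cyclotomic d K := minpoly.dvd K ξ <| by
    rw [aeval_def, ← eval_map, map_cyclotomic]
    exact hξ.isRoot_cyclotomic hd.bot_lt
  have : FiniteDimensional ℚ K := adjoin.finiteDimensional (hμ.isIntegral hm.bot_lt).tower_top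
  have : FiniteDimensional K K⟮ξ⟯ := adjoin.finiteDimensional hξK
  have : FiniteDimensional ℚ (K⟮ξ⟯.restrictScalars ℚ) := FiniteDimensional.trans ℚ K K⟮ξ⟯
  have hle : ℚ⟮ξ * μ⟯ ≤ K⟮ξ⟯.restrictScalars ℚ := by
    rw [adjoin_simple_le_iff]
    exact mul_mem (mem_adjoin_simple_self K ξ)
      (IntermediateField.algebraMap_mem K⟮ξ⟯ ⟨μ, mem_adjoin_simple_self ℚ μ⟩)
  have hdeg : m.totient * d.totient ≤ m.totient * (minpoly K ξ).natDegree := by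
    calc m.totient * d.totient = finrank ℚ ℚ⟮ξ * μ⟯ := by
          rw [hξμ.finrank_adjoin_rat (mul_ne_zero hd hm), Nat.totient_mul hdm, mul_comm]
      _ ≤ finrank ℚ (K⟮ξ⟯.restrictScalars ℚ) := finrank_le_of_le_right hle
      _ = finrank ℚ K * finrank K K⟮ξ⟯ := (finrank_mul_finrank ℚ K K⟮ξ⟯).symm
      _ = m.totient * (minpoly K ξ).natDegree := by
          rw [hμ.finrank_adjoin_rat hm, adjoin.finrank hξK]
  refine (eq_of_monic_of_dvd_of_natDegree_le (minpoly.monic hξK) (cyclotomic.monic d K)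
    hdvd ?_).symm
  rw [natDegree_cyclotomic]
  exact Nat.le_of_mul_le_mul_left hdeg (Nat.totient_pos.mpr hm.bot_lt)

theorem zeta_eq_pow (n : ℕ) (k : ZMod n) :
    zeta n k = Complex.exp (2 * Real.pi * Complex.I / n) ^ k.val := by
  rw [zeta, ← Complex.exp_nat_mul]
  ring_nf

theorem zeta_injective {n : ℕ} (hn : n ≠ 0) : Function.Injective (zeta n) := by
  have := NeZero.mk hn
  intro a b h
  simp only [zeta_eq_pow] at h
  exact ZMod.val_injective n ((Complex.isPrimitiveRoot_exp n hn).pow_inj a.val_lt b.val_lt h)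

theorem QuasiIndep.mono {S T : Set ℂ} (hT : QuasiIndep T) (hST : S ⊆ T) : QuasiIndep S :=
  fun s ε hs ↦ hT s ε (hs.trans hST)

theorem quasiIndep_image_iff {α : Type*} {f : α → ℂ} (hf : Function.Injective f) {E : Set α} :
    QuasiIndep (f '' E) ↔ ∀ (t : Finset α) (δ : α → ℤ), ↑t ⊆ E →
      (∀ z ∈ t, δ z = 0 ∨ δ z = 1 ∨ δ z = -1) →
      ∑ z ∈ t, (δ z : ℂ) * f z = 0 → ∀ z ∈ t, δ z = 0 := by
  classical
  constructor
  · intro h t δ htE hδ hsum z hz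
    have : Nonempty α := ⟨z⟩
    have hinv : ∀ z, Function.invFun f (f z) = z := Function.leftInverse_invFun hf
    have := h (t.image f) (δ ∘ Function.invFun f) (by simpa using Set.image_mono htE)
      (by simpa [hinv] using hδ) (by simpa [Finset.sum_image hf.injOn, hinv] using hsum)
      (f z) (Finset.mem_image_of_mem f hz)
    simpa [hinv] using this
  · intro h s ε hs hε hsum
    obtain ⟨t, htE, rfl⟩ := Finset.subset_set_image_iff.mp hs
    rw [Finset.sum_image hf.injOn] at hsum
    simpa using h t (ε ∘ f) htE (by simpa using hε) hsum

theorem mem_image_add_zmultiples_iff {n p : ℕ} (hpn : p ∣ n) (b z : ZMod n) :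
    z ∈ (b + ·) '' (AddSubgroup.zmultiples (p : ZMod n) : Set (ZMod n)) ↔
      ZMod.castHom hpn (ZMod p) z = ZMod.castHom hpn (ZMod p) b := by
  rw [Set.image_add_left, Set.mem_preimage, SetLike.mem_coe, ← sub_eq_zero, ← map_sub,
    neg_add_eq_sub]
  constructor
  · rintro ⟨j, hj⟩
    rw [← hj, map_zsmul, map_natCast, ZMod.natCast_self, smul_zero]
  · intro h
    obtain ⟨k, hk⟩ := ZMod.intCast_surjective (z - b)
    rw [← hk, map_intCast, ZMod.intCast_zmod_eq_zero_iff_dvd] at h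
    obtain ⟨j, rfl⟩ := h
    exact ⟨j, by simp [← hk, mul_comm]⟩

theorem exists_zeta_eq_mul {p m : ℕ} (h₀ : p * m ≠ 0) (hpm : p.Coprime m) :
    ∃ ξ μ : ℂ, IsPrimitiveRoot ξ p ∧ IsPrimitiveRoot μ m ∧ ∀ z : ZMod (p * m),
      zeta (p * m) z = ξ ^ (ZMod.castHom (dvd_mul_right p m) (ZMod p) z).val * μ ^ z.val := by
  obtain ⟨ξ, μ, hξ, hμ, h⟩ :=
    (Complex.isPrimitiveRoot_exp _ h₀).exists_eq_mul_of_coprime h₀ hpm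
  refine ⟨ξ, μ, hξ, hμ, fun z ↦ ?_⟩
  have : NeZero (p * m) := ⟨h₀⟩
  rw [zeta_eq_pow, h, mul_pow, ZMod.castHom_apply, ZMod.cast_eq_val, ZMod.val_natCast,
    ← pow_eq_pow_mod _ hξ.pow_eq_one]

theorem sum_filter_zeta_eq_zero {p m : ℕ} [Fact p.Prime] (hpm : p.Coprime m)
    {t : Finset (ZMod (p * m))} {δ : ZMod (p * m) → ℤ}
    (hsum : ∑ z ∈ t, (δ z : ℂ) * zeta (p * m) z = 0) {a₀ : ZMod p}
    (ha₀ : ∀ z ∈ t, ZMod.castHom (dvd_mul_right p m) (ZMod p) z ≠ a₀) (a : ZMod p) :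
    ∑ z ∈ t with ZMod.castHom (dvd_mul_right p m) (ZMod p) z = a,
      (δ z : ℂ) * zeta (p * m) z = 0 := by
  have hp : p.Prime := Fact.out
  have hm : m ≠ 0 := by
    rintro rfl
    exact hp.ne_one (Nat.coprime_zero_right p |>.mp hpm)
  obtain ⟨ξ, μ, hξ, hμ, hζ⟩ := exists_zeta_eq_mul (mul_ne_zero hp.ne_zero hm) hpm
  have hmin := hξ.minpoly_adjoin_eq_cyclotomic hμ hp.ne_zero hm hpm
  let c : ZMod (p * m) → ℚ⟮μ⟯ := fun z ↦ δ z * ⟨μ, mem_adjoin_simple_self ℚ μ⟩ ^ z.val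
  have hterm (z : ZMod (p * m)) : algebraMap ℚ⟮μ⟯ ℂ (c z) *
      ξ ^ (ZMod.castHom (dvd_mul_right p m) (ZMod p) z).val = δ z * zeta (p * m) z := by
    simp only [c, hζ, IntermediateField.algebraMap_apply, IntermediateField.coe_mul,
      SubringClass.coe_intCast, SubmonoidClass.mk_pow]
    ring
  simpa only [hterm] using
    sum_filter_eq_zero_of_sum_eq_zero hmin (c := c) (by simpa only [hterm] using hsum) ha₀ a

theorem stmt_2_general (n : ℕ) (hn : Squarefree n) (p : ℕ) (hp : p.Prime) (hpn : p ∣ n)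
    -- `H` is the subgroup of `Z_n` of order `n / p` (the multiples of `p`)
    (H : Set (ZMod n)) (hH : H = ↑(AddSubgroup.zmultiples ((p : ZMod n))))
    (E : Set (ZMod n))
    (hempty : ∃ b : ZMod n, E ∩ ((b + ·) '' H) = ∅) :
    QuasiIndep (zeta n '' E) ↔
      ∀ a : ZMod n, QuasiIndep (zeta n '' (E ∩ ((a + ·) '' H))) := by
  classical
  have := Fact.mk hp
  obtain ⟨m, rfl⟩ := hpn
  subst hH
  refine ⟨fun h a ↦ h.mono (Set.image_mono Set.inter_subset_left), fun h ↦ ?_⟩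
  obtain ⟨b, hb⟩ := hempty
  set π := ZMod.castHom (dvd_mul_right p m) (ZMod p)
  simp only [quasiIndep_image_iff (zeta_injective hn.ne_zero)] at h ⊢
  intro t δ htE hδ hsum z hz
  have hmiss (w : ZMod (p * m)) (hw : w ∈ t) : π w ≠ π b := fun hwb ↦
    (Set.eq_empty_iff_forall_notMem.mp hb) w ⟨htE hw, (mem_image_add_zmultiples_iff _ b w).2 hwb⟩
  have hcoset : ↑(t.filter (π · = π z)) ⊆
      E ∩ (z + ·) '' (AddSubgroup.zmultiples (p : ZMod (p * m)) : Set (ZMod (p * m))) := by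
    intro w hw
    obtain ⟨hwt, hwz⟩ := Finset.mem_filter.mp hw
    exact ⟨htE hwt, (mem_image_add_zmultiples_iff _ z w).2 hwz⟩
  exact h z _ δ hcoset (fun w hw ↦ hδ w (Finset.mem_filter.mp hw).1)
    (sum_filter_zeta_eq_zero (Nat.squarefree_mul_iff.mp hn).1 hsum hmiss (π z)) z
    (Finset.mem_filter.mpr ⟨hz, rfl⟩)

theorem stmt_2 (n : ℕ) (hn : Squarefree n) (p : ℕ) (hp : p.Prime) (hpn : p ∣ n)
    (hK : 1 < n.primeFactors.card)
    -- `H` is the subgroup of `Z_n` of order `n / p` (the multiples of `p`)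
    (H : Set (ZMod n)) (hH : H = ↑(AddSubgroup.zmultiples ((p : ZMod n))))
    (E : Set (ZMod n))
    (hempty : ∃ b : ZMod n, E ∩ ((b + ·) '' H) = ∅) :
    QuasiIndep (zeta n '' E) ↔
      ∀ a : ZMod n, QuasiIndep (zeta n '' (E ∩ ((a + ·) '' H))) :=
  stmt_2_general n hn p hp hpn H hH E hempty
end

section
/- Let n > 1 be square-free and let q be a positive prime not dividing n. Then Ψ(nq) ≥ (q − 1)·Ψ(n), where Ψ(m) denotes the maximal cardinality of a quasi-independent subset of the m-th roots of unity. -/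
/-- `Psi N` is the maximal cardinality of a quasi-independent set of N-th roots of unity. -/
noncomputable def Psi (N : ℕ) : ℕ :=
  sSup {k | ∃ E : Finset ℂ, (∀ z ∈ E, z ^ N = 1) ∧ QuasiIndep ↑E ∧ E.card = k}

/-!
Let `ζ` be a primitive `nq`-th root of unity and `K = ℚ(ζ^q)`, which contains every `n`-th
root of unity. As `n` and `q` are coprime, `K(ζ^n) = ℚ(ζ)`, so the tower law gives `ζ^n`
degree `φ(q)` over `K`, and `1, ζ^n, …, (ζ^n)^(φ(q)-1)` are `K`-linearly independent. For a
quasi-independent set `E` of `n`-th roots of unity, a signed relation among the products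
`(ζ^n)^j z` (`z ∈ E`) is a `K`-linear relation among these powers whose coefficients are signed
sums over `E`; all of them vanish, hence so do all signs. The `φ(q) · #E` products are
therefore distinct and form a quasi-independent set of `nq`-th roots of unity, and
`φ(q) = q - 1` for `q` prime.
-/

open Polynomial IntermediateField Module

theorem IntermediateField.restrictScalars_adjoin_pow_adjoin_pow_of_coprime {F L : Type*}
    [Field F] [Field L] [Algebra F L] {ζ : L} (hζ : ζ ≠ 0) {m n : ℕ} (h : m.Coprime n) :
    (F⟮ζ ^ m⟯⟮ζ ^ n⟯).restrictScalars F = F⟮ζ⟯ := by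
  rw [adjoin_adjoin_left, Set.singleton_union]
  refine le_antisymm (adjoin_le_iff.2 ?_) (adjoin_simple_le_iff.2 ?_)
  · rintro x (rfl | rfl) <;> exact pow_mem (mem_adjoin_simple_self F ζ) _
  · obtain ⟨u, v, huv⟩ := Nat.isCoprime_iff_coprime.2 h
    have hζ_eq : (ζ ^ m) ^ u * (ζ ^ n) ^ v = ζ := by
      rw [← zpow_natCast, ← zpow_natCast, ← zpow_mul, ← zpow_mul, ← zpow_add₀ hζ,
        mul_comm _ u, mul_comm _ v, huv, zpow_one]
    have hu : (ζ ^ m) ^ u ∈ F⟮ζ ^ m, ζ ^ n⟯ :=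
      zpow_mem (subset_adjoin F _ (Set.mem_insert _ _)) u
    have hv : (ζ ^ n) ^ v ∈ F⟮ζ ^ m, ζ ^ n⟯ :=
      zpow_mem (subset_adjoin F _ (Set.mem_insert_of_mem _ (Set.mem_singleton _))) v
    simpa only [hζ_eq] using mul_mem hu hv

theorem IsPrimitiveRoot.natDegree_minpoly_adjoin_pow {L : Type*} [Field L] [CharZero L]
    {ζ : L} {m n : ℕ} (hζ : IsPrimitiveRoot ζ (m * n)) (hm : 0 < m) (hn : 0 < n)
    (h : m.Coprime n) : (minpoly ℚ⟮ζ ^ n⟯ (ζ ^ m)).natDegree = n.totient := by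
  have hmn : 0 < m * n := Nat.mul_pos hm hn
  have finrank_adjoin {k : ℕ} {μ : L} (hμ : IsPrimitiveRoot μ k) (hk : 0 < k) :
      finrank ℚ ℚ⟮μ⟯ = k.totient := by
    rw [adjoin.finrank (hμ.isIntegral hk).tower_top, ← cyclotomic_eq_minpoly_rat hμ hk,
      natDegree_cyclotomic]
  have h_tower : finrank ℚ ℚ⟮ζ ^ n⟯ * finrank ℚ⟮ζ ^ n⟯ ℚ⟮ζ ^ n⟯⟮ζ ^ m⟯ =
      finrank ℚ ((ℚ⟮ζ ^ n⟯⟮ζ ^ m⟯).restrictScalars ℚ) :=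
    Module.finrank_mul_finrank ℚ ℚ⟮ζ ^ n⟯ (ℚ⟮ζ ^ n⟯⟮ζ ^ m⟯)
  have h_eq : (ℚ⟮ζ ^ n⟯⟮ζ ^ m⟯).restrictScalars ℚ = ℚ⟮ζ⟯ :=
    restrictScalars_adjoin_pow_adjoin_pow_of_coprime (hζ.ne_zero hmn.ne') h.symm
  rw [h_eq, adjoin.finrank ((hζ.pow hmn rfl).isIntegral hn).tower_top,
    finrank_adjoin (hζ.pow hmn (mul_comm m n)) hm, finrank_adjoin hζ hmn,
    Nat.totient_mul h] at h_tower
  exact Nat.eq_of_mul_eq_mul_left (Nat.totient_pos.2 hm) h_tower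

def QuasiIndepOn {ι : Type*} (f : ι → ℂ) (s : Finset ι) : Prop :=
  ∀ ε : ι → ℤ, (∀ i ∈ s, ε i = 0 ∨ ε i = 1 ∨ ε i = -1) →
    ∑ i ∈ s, (ε i : ℂ) * f i = 0 → ∀ i ∈ s, ε i = 0

namespace QuasiIndepOn

variable {ι : Type*} [DecidableEq ι] {f : ι → ℂ} {s : Finset ι}

theorem injOn (h : QuasiIndepOn f s) : Set.InjOn f s := by
  intro i hi j hj hij
  by_contra hne
  let ε : ι → ℤ := fun k => (if k = i then 1 else 0) - (if k = j then 1 else 0)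
  have hsum : ∑ k ∈ s, (ε k : ℂ) * f k = 0 := by
    simp only [ε, Int.cast_sub, sub_mul, Finset.sum_sub_distrib, Int.cast_ite, Int.cast_one,
      Int.cast_zero, ite_mul, one_mul, zero_mul, Finset.sum_ite_eq', Finset.mem_coe.1 hi,
      Finset.mem_coe.1 hj, if_true, hij, sub_self]
  have hε : ∀ k ∈ s, ε k = 0 ∨ ε k = 1 ∨ ε k = -1 := by
    intro k _
    simp only [ε]
    split_ifs <;> simp_all
  simpa [ε, hne] using h ε hε hsum i hi

theorem quasiIndep_image (h : QuasiIndepOn f s) : QuasiIndep ↑(s.image f) := by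
  intro t ε ht hε hsum
  have hts : t ⊆ s.image f := by exact_mod_cast ht
  let ε' : ι → ℤ := fun i => if f i ∈ t then ε (f i) else 0
  have hsum' : ∑ i ∈ s, (ε' i : ℂ) * f i = 0 := by
    calc ∑ i ∈ s, (ε' i : ℂ) * f i
        = ∑ x ∈ s.image f, ((if x ∈ t then ε x else 0 : ℤ) : ℂ) * x :=
          (Finset.sum_image (f := fun x => ((if x ∈ t then ε x else 0 : ℤ) : ℂ) * x)
            h.injOn).symm
      _ = ∑ x ∈ t, (ε x : ℂ) * x := by
          simp only [Int.cast_ite, Int.cast_zero, ite_mul, zero_mul, Finset.sum_ite_mem,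
            Finset.inter_eq_right.2 hts]
      _ = 0 := hsum
  have hε' : ∀ i ∈ s, ε' i = 0 ∨ ε' i = 1 ∨ ε' i = -1 := by
    intro i _
    by_cases hi : f i ∈ t
    · simpa [ε', hi] using hε _ hi
    · simp [ε', hi]
  intro x hx
  obtain ⟨i, hi, rfl⟩ := Finset.mem_image.1 (hts hx)
  simpa [ε', hx] using h ε' hε' hsum' i hi

end QuasiIndepOn

theorem QuasiIndep.quasiIndepOn_mul {F : Type*} [Field F] [Algebra F ℂ]
    {K : IntermediateField F ℂ} {E : Finset ℂ} (hE : QuasiIndep ↑E) (hEK : ∀ z ∈ E, z ∈ K)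
    {ι : Type*} [Fintype ι] {v : ι → ℂ} (hv : LinearIndependent K v) :
    QuasiIndepOn (fun p : ι × ℂ => v p.1 * p.2) (Finset.univ ×ˢ E) := by
  intro ε hε hsum
  let c : ι → K := fun i =>
    ⟨∑ z ∈ E, (ε (i, z) : ℂ) * z,
      K.sum_mem fun z hz => K.mul_mem (K.intCast_mem _) (hEK z hz)⟩
  have hc : ∑ i, c i • v i = 0 := by
    rw [← hsum, Finset.sum_product]
    refine Finset.sum_congr rfl fun i _ => ?_
    rw [IntermediateField.smul_def, smul_eq_mul, Finset.sum_mul]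
    exact Finset.sum_congr rfl fun z _ => by ring
  rintro ⟨i, z⟩ hiz
  obtain ⟨-, hz⟩ := Finset.mem_product.1 hiz
  have hci : ∑ z ∈ E, (ε (i, z) : ℂ) * z = 0 :=
    congrArg Subtype.val (Fintype.linearIndependent_iff.1 hv c hc i)
  exact hE E (fun z => ε (i, z)) subset_rfl
    (fun z hz => hε (i, z) (Finset.mem_product.2 ⟨Finset.mem_univ i, hz⟩)) hci z hz

section Psi

variable {N : ℕ}

theorem bddAbove_card_quasiIndep_roots (hN : 0 < N) :
    BddAbove {k | ∃ E : Finset ℂ, (∀ z ∈ E, z ^ N = 1) ∧ QuasiIndep ↑E ∧ E.card = k} := by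
  refine ⟨N, ?_⟩
  rintro _ ⟨E, hE, -, rfl⟩
  calc E.card ≤ (nthRootsFinset N (1 : ℂ)).card :=
        Finset.card_le_card fun z hz => (mem_nthRootsFinset hN 1).2 (hE z hz)
    _ = N := (Complex.isPrimitiveRoot_exp N hN.ne').card_nthRootsFinset

theorem card_le_psi (hN : 0 < N) {E : Finset ℂ} (hroots : ∀ z ∈ E, z ^ N = 1)
    (hE : QuasiIndep ↑E) : E.card ≤ Psi N :=
  le_csSup (bddAbove_card_quasiIndep_roots hN) ⟨E, hroots, hE, rfl⟩

theorem exists_card_eq_psi (hN : 0 < N) :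
    ∃ E : Finset ℂ, (∀ z ∈ E, z ^ N = 1) ∧ QuasiIndep ↑E ∧ E.card = Psi N := by
  refine Nat.sSup_mem ?_ (bddAbove_card_quasiIndep_roots hN)
  exact ⟨0, ∅, by simp, fun _ _ hs _ _ z hz => absurd (hs hz) (by simp), rfl⟩

end Psi

theorem totient_mul_psi_le_psi_mul {n q : ℕ} (hn : 0 < n) (hq : 0 < q) (h : n.Coprime q) :
    q.totient * Psi n ≤ Psi (n * q) := by
  have hnq : 0 < n * q := Nat.mul_pos hn hq
  have : NeZero n := ⟨hn.ne'⟩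
  obtain ⟨E, hE_roots, hE, hE_card⟩ := exists_card_eq_psi hn
  obtain ⟨ζ, hζ⟩ : ∃ ζ : ℂ, IsPrimitiveRoot ζ (n * q) :=
    ⟨_, Complex.isPrimitiveRoot_exp _ hnq.ne'⟩
  have hEK : ∀ z ∈ E, z ∈ ℚ⟮ζ ^ q⟯ := by
    intro z hz
    obtain ⟨i, -, rfl⟩ := (hζ.pow hnq (mul_comm n q)).eq_pow_of_pow_eq_one (hE_roots z hz)
    exact pow_mem (mem_adjoin_simple_self ℚ _) i
  let S : Finset (Fin (minpoly ℚ⟮ζ ^ q⟯ (ζ ^ n)).natDegree × ℂ) := Finset.univ ×ˢ E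
  let f : Fin (minpoly ℚ⟮ζ ^ q⟯ (ζ ^ n)).natDegree × ℂ → ℂ :=
    fun p => (ζ ^ n) ^ (p.1 : ℕ) * p.2
  have hE' := hE.quasiIndepOn_mul hEK (linearIndependent_pow (ζ ^ n))
  have hroots : ∀ x ∈ S.image f, x ^ (n * q) = 1 := by
    simp only [S, Finset.mem_image, Finset.mem_product]
    rintro _ ⟨⟨j, z⟩, ⟨-, hz⟩, rfl⟩
    calc ((ζ ^ n) ^ (j : ℕ) * z) ^ (n * q) = (ζ ^ (n * q)) ^ (n * j) * (z ^ n) ^ q := by ring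
      _ = 1 := by rw [hζ.pow_eq_one, hE_roots z hz, one_pow, one_pow, one_mul]
  calc q.totient * Psi n = S.card := by
        rw [Finset.card_product, Finset.card_univ, Fintype.card_fin,
          hζ.natDegree_minpoly_adjoin_pow hn hq h, hE_card]
    _ = (S.image f).card := (Finset.card_image_of_injOn hE'.injOn).symm
    _ ≤ Psi (n * q) := card_le_psi hnq hroots hE'.quasiIndep_image

theorem stmt_3_general (n q : ℕ) (hn : 1 < n)
    (hq : q.Prime) (hqn : ¬ q ∣ n) :
    (q - 1) * Psi n ≤ Psi (n * q) :=
  Nat.totient_prime hq ▸ totient_mul_psi_le_psi_mul (by omega) hq.pos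
    ((Nat.Prime.coprime_iff_not_dvd hq).2 hqn).symm

theorem stmt_3 (n q : ℕ) (hn : 1 < n) (hsf : Squarefree n)
    (hq : q.Prime) (hqn : ¬ q ∣ n) :
    (q - 1) * Psi n ≤ Psi (n * q) :=
  stmt_3_general n q hn hq hqn
end

section
/- Let n be a square-free odd integer, let p be a prime factor of n, and set m = n/p, so that Z_n ≅ Z_m × Z_p. Suppose E ⊆ Z_n meets each coset of Z_m (i.e., of the subgroup of order m) in at most one point. If #E < p, then E is independent (as a set of roots of unity in ℂ). -/
def Indep (S : Set ℂ) : Prop :=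
  ∀ (s : Finset ℂ) (ε : ℂ → ℤ), ↑s ⊆ S →
    (∑ z ∈ s, (ε z : ℂ) * z) = 0 → ∀ z ∈ s, ε z = 0

section
open Polynomial Finset

lemma key (n p : ℕ) (hn0 : n ≠ 0) (hp : p.Prime) (m : ℕ) (hnm : n = m * p)
    (hpm : ¬ p ∣ m)
    (E : Finset (ZMod n))
    (hinj : ∀ k ∈ E, ∀ k' ∈ E, ((k.val : ZMod p) = (k'.val : ZMod p)) → k = k')
    (hcard : E.card < p) (δ : ZMod n → ℤ)
    (ζ : ℂ) (hζ : IsPrimitiveRoot ζ n)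
    (hrel : ∑ k ∈ E, (δ k : ℂ) * ζ ^ k.val = 0) :
    ∀ k ∈ E, δ k = 0 := by
  haveI : NeZero n := ⟨hn0⟩
  haveI : Fact p.Prime := ⟨hp⟩
  haveI : NeZero p := ⟨hp.pos.ne'⟩
  have hm0 : m ≠ 0 := by rintro rfl; rw [zero_mul] at hnm; exact hn0 hnm
  have hmz : (m : ZMod p) ≠ 0 := by
    rw [Ne, ZMod.natCast_eq_zero_iff]; exact hpm
  have hζ0 : ζ ≠ 0 := hζ.ne_zero hn0
  -- Step 1: conjugate relations
  have hrel' : ∀ u : ℕ, u.Coprime n → ∑ k ∈ E, (δ k : ℂ) * ζ ^ (u * k.val) = 0 := by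
    set f : ℚ[X] := ∑ k ∈ E, C (δ k : ℚ) * X ^ k.val with hf
    have haev : ∀ ξ : ℂ, aeval ξ f = ∑ k ∈ E, (δ k : ℂ) * ξ ^ k.val := by
      intro ξ
      rw [hf, map_sum]
      refine Finset.sum_congr rfl fun k _ => ?_
      simp
    have hd : minpoly ℚ ζ ∣ f := minpoly.dvd ℚ ζ (by rw [haev]; exact hrel)
    rw [← cyclotomic_eq_minpoly_rat hζ (Nat.pos_of_ne_zero hn0)] at hd
    intro u hu
    have hξ : IsPrimitiveRoot (ζ ^ u) n := hζ.pow_of_coprime u hu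
    obtain ⟨g, hg⟩ := hd
    have h0 : aeval (ζ ^ u) f = 0 := by
      rw [hg, map_mul]
      have : aeval (ζ ^ u) (cyclotomic n ℚ) = 0 := by
        have := (Polynomial.isRoot_cyclotomic_iff (R := ℂ)).2 hξ
        rw [aeval_def, ← eval_map, map_cyclotomic]
        exact this
      rw [this, zero_mul]
    rw [haev] at h0
    rw [show (∑ k ∈ E, (δ k:ℂ) * ζ^(u*k.val)) = ∑ k ∈ E, (δ k:ℂ)*(ζ^u)^k.val from
      Finset.sum_congr rfl fun k _ => by rw [pow_mul]]
    exact h0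
  -- Step 2: p-th root of unity machinery
  set ω : ℂ := ζ ^ m with hωdef
  have hω : IsPrimitiveRoot ω p := hζ.pow (Nat.pos_of_ne_zero hn0) hnm
  have hω0 : ω ≠ 0 := pow_ne_zero _ hζ0
  set W : ZMod p → ℂ := fun x => ω ^ x.val with hW
  have Wnat : ∀ x : ℕ, ω ^ x = W (x : ZMod p) := by
    intro x
    show ω ^ x = ω ^ (ZMod.val ((x : ZMod p)))
    rw [ZMod.val_natCast]
    conv_lhs => rw [← Nat.mod_add_div x p, pow_add, pow_mul, hω.pow_eq_one, one_pow, mul_one]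
  have Wadd : ∀ x y : ZMod p, W (x + y) = W x * W y := by
    intro x y
    have h1 : W x * W y = ω ^ (x.val + y.val) := (pow_add ω _ _).symm
    rw [h1, Wnat]
    congr 1
    push_cast [ZMod.natCast_val, ZMod.cast_id]
    rfl
  have Wne : ∀ x, W x ≠ 0 := fun x => pow_ne_zero _ hω0
  have Wsum : ∑ x : ZMod p, W x = 0 := by
    rw [← hω.geom_sum_eq_zero hp.one_lt]
    refine Finset.sum_nbij' (fun x => x.val) (fun i => (i : ZMod p)) ?_ ?_ ?_ ?_ ?_
    · intro x _; exact Finset.mem_range.2 (ZMod.val_lt x)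
    · intro i _; exact Finset.mem_univ _
    · intro x _; simp [ZMod.natCast_val, ZMod.cast_id]
    · intro i hi; exact ZMod.val_cast_of_lt (Finset.mem_range.1 hi)
    · intro x _; rfl
  have Wmulsum : ∀ d : ZMod p, d ≠ 0 → ∑ x : ZMod p, W (x * d) = 0 := by
    intro d hd
    rw [← Wsum]
    exact Fintype.sum_equiv (Equiv.mulRight₀ d hd) _ _ (fun x => rfl)
  have Wsum0 : ∑ x : ZMod p, W (x * 0) = (p : ℂ) := by
    simp [hW, ZMod.card]
  -- Step 3: relations in terms of W
  set a : ZMod n → ZMod p := fun k => (k.val : ZMod p) with ha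
  set c : ZMod n → ℂ := fun k => (δ k : ℂ) * ζ ^ k.val with hc
  have hrelW : ∀ i : ZMod p, (m : ZMod p) * i + 1 ≠ 0 →
      ∑ k ∈ E, c k * W (i * a k) = 0 := by
    intro i hi
    set j : ZMod p := (m : ZMod p) * i + 1 with hj
    have cop : Nat.Coprime m p := (hp.coprime_iff_not_dvd.2 hpm).symm
    obtain ⟨u, hu1, huj⟩ := Nat.chineseRemainder cop 1 j.val
    have hup : (u : ZMod p) = j := by
      have h1 : ((u : ℕ) : ZMod p) = ((j.val : ℕ) : ZMod p) :=
        (ZMod.natCast_eq_natCast_iff _ _ _).2 huj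
      rw [h1]
      simp [ZMod.natCast_val, ZMod.cast_id]
    have hu0 : u ≠ 0 := by
      rintro rfl
      rw [Nat.cast_zero] at hup
      exact hi hup.symm
    have hcop : u.Coprime n := by
      rw [hnm]
      refine Nat.Coprime.mul_right ?_ ?_
      · have h := hu1.gcd_eq
        unfold Nat.Coprime
        rw [h]
        exact Nat.gcd_one_left m
      · rw [Nat.coprime_comm]
        rw [hp.coprime_iff_not_dvd]
        intro hdvd
        have h0 : (u : ZMod p) = 0 := (ZMod.natCast_eq_zero_iff _ _).2 hdvd
        exact hi (hup.symm.trans h0)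
    obtain ⟨v, hv⟩ := (Nat.modEq_iff_dvd' (Nat.one_le_iff_ne_zero.2 hu0)).1 hu1.symm
    have huv : u = m * v + 1 := by omega
    have hvp : (v : ZMod p) = i := by
      have h2 : (u : ZMod p) = (m : ZMod p) * (v : ZMod p) + 1 := by
        rw [huv]; push_cast; ring
      rw [hup, hj] at h2
      refine mul_left_cancel₀ hmz ?_
      linear_combination -h2
    have hsum := hrel' u hcop
    calc ∑ k ∈ E, c k * W (i * a k) = ∑ k ∈ E, (δ k : ℂ) * ζ ^ (u * k.val) := by
          refine Finset.sum_congr rfl fun k _ => ?_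
          have he : u * k.val = k.val + m * (v * k.val) := by rw [huv]; ring
          rw [he, pow_add, pow_mul, ← hωdef, Wnat]
          have harg : ((v * k.val : ℕ) : ZMod p) = i * a k := by
            push_cast
            rw [hvp, ha]
          rw [harg, hc]
          ring
      _ = 0 := hsum
  -- Step 4: the averaging argument
  set i₀ : ZMod p := -(m : ZMod p)⁻¹ with hi₀def
  have hi₀ : ∀ i : ZMod p, i ≠ i₀ → (m : ZMod p) * i + 1 ≠ 0 := by
    intro i hne hcon
    apply hne
    have h1 : (m : ZMod p) * i = (m : ZMod p) * i₀ := by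
      rw [hi₀def, mul_neg, mul_inv_cancel₀ hmz]
      linear_combination hcon
    exact mul_left_cancel₀ hmz h1
  set S : ℂ := ∑ k ∈ E, c k * W (i₀ * a k) with hSdef
  have hkey : ∀ b : ZMod p,
      (p : ℂ) * (∑ k ∈ E.filter (fun k => a k = b), c k) = W (-(i₀ * b)) * S := by
    intro b
    have h0 : ∑ i ∈ Finset.univ.erase i₀, W (-(i * b)) * ∑ k ∈ E, c k * W (i * a k) = 0 :=
      Finset.sum_eq_zero fun i hi => by
        rw [hrelW i (hi₀ i (Finset.ne_of_mem_erase hi)), mul_zero]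
    have h1 : ∀ i : ZMod p, W (-(i * b)) * ∑ k ∈ E, c k * W (i * a k)
        = ∑ k ∈ E, c k * W (i * (a k - b)) := by
      intro i
      rw [Finset.mul_sum]
      refine Finset.sum_congr rfl fun k _ => ?_
      rw [show i * (a k - b) = i * a k + -(i * b) by ring, Wadd]
      ring
    have h2 : ∑ k ∈ E, c k * (∑ i ∈ Finset.univ.erase i₀, W (i * (a k - b))) = 0 := by
      calc ∑ k ∈ E, c k * ∑ i ∈ Finset.univ.erase i₀, W (i * (a k - b))
          = ∑ k ∈ E, ∑ i ∈ Finset.univ.erase i₀, c k * W (i * (a k - b)) :=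
            Finset.sum_congr rfl fun k _ => Finset.mul_sum _ _ _
        _ = ∑ i ∈ Finset.univ.erase i₀, ∑ k ∈ E, c k * W (i * (a k - b)) := Finset.sum_comm
        _ = ∑ i ∈ Finset.univ.erase i₀, W (-(i * b)) * ∑ k ∈ E, c k * W (i * a k) :=
            Finset.sum_congr rfl fun i _ => (h1 i).symm
        _ = 0 := h0
    have h3 : ∀ k : ZMod n, ∑ i ∈ Finset.univ.erase i₀, W (i * (a k - b))
        = (if a k = b then (p : ℂ) else 0) - W (i₀ * (a k - b)) := by
      intro k
      rw [Finset.sum_erase_eq_sub (Finset.mem_univ i₀)]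
      congr 1
      by_cases h : a k = b
      · rw [if_pos h, show a k - b = 0 by rw [h]; ring]
        exact Wsum0
      · rw [if_neg h]
        exact Wmulsum _ (sub_ne_zero.2 h)
    have h4 : ∑ k ∈ E, c k * ((if a k = b then (p : ℂ) else 0) - W (i₀ * (a k - b))) = 0 := by
      calc ∑ k ∈ E, c k * ((if a k = b then (p : ℂ) else 0) - W (i₀ * (a k - b)))
          = ∑ k ∈ E, c k * (∑ i ∈ Finset.univ.erase i₀, W (i * (a k - b))) :=
            Finset.sum_congr rfl fun k _ => by rw [h3]
        _ = 0 := h2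
    have h5 : ∑ k ∈ E, c k * (if a k = b then (p : ℂ) else 0)
        = (p : ℂ) * ∑ k ∈ E.filter (fun k => a k = b), c k := by
      rw [Finset.mul_sum, Finset.sum_filter]
      exact Finset.sum_congr rfl fun k _ => by split <;> ring
    have h6 : ∑ k ∈ E, c k * W (i₀ * (a k - b)) = W (-(i₀ * b)) * S := by
      rw [hSdef, Finset.mul_sum]
      refine Finset.sum_congr rfl fun k _ => ?_
      rw [show i₀ * (a k - b) = i₀ * a k + -(i₀ * b) by ring, Wadd]
      ring
    have h7 : ∑ k ∈ E, (c k * (if a k = b then (p : ℂ) else 0) - c k * W (i₀ * (a k - b))) = 0 := by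
      calc ∑ k ∈ E, (c k * (if a k = b then (p : ℂ) else 0) - c k * W (i₀ * (a k - b)))
          = ∑ k ∈ E, c k * ((if a k = b then (p : ℂ) else 0) - W (i₀ * (a k - b))) :=
            Finset.sum_congr rfl fun k _ => (mul_sub _ _ _).symm
        _ = 0 := h4
    rw [Finset.sum_sub_distrib, h5, h6] at h7
    linear_combination h7
  have himg : E.image a ≠ Finset.univ := by
    intro h
    have h1 : (Finset.univ : Finset (ZMod p)).card ≤ E.card := h ▸ Finset.card_image_le
    rw [Finset.card_univ, ZMod.card] at h1
    omega
  have hcompl : ((E.image a)ᶜ : Finset (ZMod p)).Nonempty := by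
    rw [← Finset.card_pos, Finset.card_compl]
    rw [show Fintype.card (ZMod p) = p from ZMod.card p]
    have := Finset.card_image_le (f := a) (s := E)
    omega
  obtain ⟨b₀, hb₀c⟩ := hcompl
  have hb₀ : b₀ ∉ E.image a := Finset.mem_compl.1 hb₀c
  have hS0 : S = 0 := by
    have hk := hkey b₀
    rw [Finset.filter_eq_empty_iff.2 ?_, Finset.sum_empty, mul_zero] at hk
    · rcases mul_eq_zero.1 hk.symm with h | h
      · exact absurd h (Wne _)
      · exact h
    · intro k hk'
      exact fun hak => hb₀ (Finset.mem_image.2 ⟨k, hk', hak⟩)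
  intro k0 hk0
  have hfil : E.filter (fun k => a k = a k0) = {k0} := by
    ext k
    simp only [Finset.mem_filter, Finset.mem_singleton]
    constructor
    · rintro ⟨hk, hak⟩
      exact hinj k hk k0 hk0 hak
    · rintro rfl
      exact ⟨hk0, rfl⟩
  have hk := hkey (a k0)
  rw [hfil, Finset.sum_singleton, hS0, mul_zero] at hk
  have hc0 : c k0 = 0 := by
    have hpne : (p : ℂ) ≠ 0 := Nat.cast_ne_zero.2 hp.pos.ne'
    exact (mul_eq_zero.1 hk).resolve_left hpne
  rw [hc] at hc0
  have hδ : (δ k0 : ℂ) = 0 := by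
    rcases mul_eq_zero.1 hc0 with h | h
    · exact h
    · exact absurd h (pow_ne_zero _ hζ0)
  exact_mod_cast hδ

end

theorem stmt_4 (n p : ℕ) (hsf : Squarefree n) (hodd : Odd n)
    (hp : p.Prime) (hpn : p ∣ n)
    -- `Zm` is the subgroup of `Z_n` of order `m = n / p` (the multiples of `p`)
    (Zm : Set (ZMod n)) (hZm : Zm = ↑(AddSubgroup.zmultiples ((p : ZMod n))))
    (E : Finset (ZMod n))
    (hmeet : ∀ a : ZMod n, ((↑E : Set (ZMod n)) ∩ ((a + ·) '' Zm)).Subsingleton)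
    (hcard : E.card < p) :
    Indep (zeta n '' ↑E) := by
  have hn0 : n ≠ 0 := by rintro rfl; simp at hodd
  haveI : NeZero n := ⟨hn0⟩
  have hnm : n = (n / p) * p := (Nat.div_mul_cancel hpn).symm
  have hpm : ¬ p ∣ (n / p) := by
    intro hdvd
    obtain ⟨t, ht⟩ := hdvd
    have hsq : p * p ∣ n := ⟨t, by rw [hnm, ht]; ring⟩
    exact hp.prime.not_unit (hsf p hsq)
  set ζ : ℂ := Complex.exp (2 * Real.pi * Complex.I / n) with hζdef
  have hζ : IsPrimitiveRoot ζ n := Complex.isPrimitiveRoot_exp n hn0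
  have hzeta : ∀ k : ZMod n, zeta n k = ζ ^ k.val := by
    intro k
    rw [hζdef, zeta, ← Complex.exp_nat_mul]
    congr 1
    ring
  have hzinj : Function.Injective (zeta n) := by
    intro k k' h
    rw [hzeta, hzeta] at h
    exact ZMod.val_injective n (hζ.pow_inj (ZMod.val_lt k) (ZMod.val_lt k') h)
  have hinj : ∀ k ∈ E, ∀ k' ∈ E, ((k.val : ZMod p) = (k'.val : ZMod p)) → k = k' := by
    intro k hk k' hk' hak
    have hmod : k.val ≡ k'.val [MOD p] := (ZMod.natCast_eq_natCast_iff _ _ _).1 hak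
    obtain ⟨t, ht⟩ := (Nat.modEq_iff_dvd).1 hmod
    have hsub : k - k' ∈ Zm := by
      rw [hZm]
      refine AddSubgroup.mem_zmultiples_iff.2 ⟨-t, ?_⟩
      have hk1 : ((k.val : ℕ) : ZMod n) = k := by rw [ZMod.natCast_val, ZMod.cast_id]
      have hk2 : ((k'.val : ℕ) : ZMod n) = k' := by rw [ZMod.natCast_val, ZMod.cast_id]
      have : ((-t * p : ℤ) : ZMod n) = k - k' := by
        have he : (-t * p : ℤ) = (k.val : ℤ) - (k'.val : ℤ) := by linarith [ht]
        rw [he]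
        push_cast
        rw [hk1, hk2]
      rw [← this, zsmul_eq_mul]
      push_cast
      ring
    refine hmeet k' ⟨hk, ⟨k - k', hsub, by simp⟩⟩ ⟨hk', ⟨0, ?_, by simp⟩⟩
    rw [hZm]
    exact AddSubgroup.zero_mem _
  intro s ε hs hsum z hz
  obtain ⟨k, hkE, rfl⟩ := hs hz
  classical
  set δ : ZMod n → ℤ := fun k => if zeta n k ∈ s then ε (zeta n k) else 0 with hδ
  set E' : Finset (ZMod n) := E.filter (fun k => zeta n k ∈ s) with hE'
  have hs_eq : s = E'.image (zeta n) := by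
    ext w
    constructor
    · intro hw
      obtain ⟨k', hk', rfl⟩ := hs hw
      exact Finset.mem_image.2 ⟨k', Finset.mem_filter.2 ⟨hk', hw⟩, rfl⟩
    · intro hw
      obtain ⟨k', hk', rfl⟩ := Finset.mem_image.1 hw
      exact (Finset.mem_filter.1 hk').2
  have hrelδ : ∑ k ∈ E, (δ k : ℂ) * ζ ^ k.val = 0 := by
    have hstep : ∑ k ∈ E, (δ k : ℂ) * ζ ^ k.val = ∑ w ∈ s, (ε w : ℂ) * w := by
      rw [hs_eq, Finset.sum_image (fun x _ y _ h => hzinj h)]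
      rw [← Finset.sum_filter_add_sum_filter_not E (fun k => zeta n k ∈ s)]
      rw [← hE']
      have hz2 : ∑ k ∈ E.filter (fun k => ¬ zeta n k ∈ s), (δ k : ℂ) * ζ ^ k.val = 0 := by
        refine Finset.sum_eq_zero fun k hk => ?_
        rw [hδ]
        simp only [(Finset.mem_filter.1 hk).2, if_false]
        simp
      rw [hz2, add_zero]
      refine Finset.sum_congr rfl fun k hk => ?_
      have hks : zeta n k ∈ s := (Finset.mem_filter.1 hk).2
      rw [hδ]
      simp only [hks, if_true]
      rw [hzeta]
    rw [hstep]
    exact hsum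
  have hall := key n p hn0 hp (n / p) hnm hpm E hinj hcard δ ζ hζ hrelδ
  have := hall k hkE
  rw [hδ] at this
  simpa [hz] using this
end

section
/- Let n be a square-free odd integer, let p be a prime factor of n, and set m = n/p. Suppose E ⊆ Z_n meets each coset of the subgroup of order m in at most one point, #E = p, and E is not a coset of the subgroup Z_p of order p. Then E is independent as a subset of the n-th roots of unity in ℂ. -/
open Polynomial IntermediateField

lemma indep_image_of_injOn {α : Type*} {f : α → ℂ} {E : Finset α} (hf : Set.InjOn f E)
    (h : ∀ ε : α → ℤ, ∑ e ∈ E, (ε e : ℂ) * f e = 0 → ∀ e ∈ E, ε e = 0) :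
    Indep (f '' E) := by
  classical
  intro s ε hs hsum z hz
  obtain ⟨e, he, rfl⟩ := hs hz
  have hs' : s = (E.filter (f · ∈ s)).image f := by
    ext y
    simp only [Finset.mem_image, Finset.mem_filter]
    exact ⟨fun hy ↦ by obtain ⟨x, hx, rfl⟩ := hs hy; exact ⟨x, ⟨hx, hy⟩, rfl⟩,
      by rintro ⟨x, ⟨-, hx⟩, rfl⟩; exact hx⟩
  have key := h (fun x ↦ if f x ∈ s then ε (f x) else 0) ?_ e he
  · simpa [hz] using key
  rw [hs', Finset.sum_image (hf.mono (Finset.coe_subset.2 (Finset.filter_subset _ _)))] at hsum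
  simpa [ite_mul, ← Finset.sum_filter] using hsum

lemma eq_of_intCast_mul_eq_intCast_mul {N : ℕ} (hN : Odd N) {u v : ℂ} (hu : u ^ N = 1)
    (hv : v ^ N = 1) {a b : ℤ} (ha : a ≠ 0) (h : (a : ℂ) * u = b * v) : u = v := by
  have hv0 : v ≠ 0 := by rintro rfl; simp [hN.pos.ne'] at hv
  have hu' : u = ((b / a : ℚ) : ℂ) * v := by
    push_cast
    field_simp
    linear_combination h
  have hq : (b / a : ℚ) ^ N = 1 := by
    have := hu ▸ congrArg (· ^ N) hu'
    simp only [mul_pow, hv, mul_one] at this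
    exact_mod_cast this.symm
  have h1 : (b / a : ℚ) = 1 := hN.pow_inj.1 (by rw [hq, one_pow])
  rw [hu', h1, Rat.cast_one, one_mul]

lemma Finset.coe_eq_coset_of_subset_of_card_eq {G : Type*} [AddGroup G] [Finite G]
    {H : AddSubgroup G} {E : Finset G} {a : G} (hsub : ↑E ⊆ (a + ·) '' (H : Set G))
    (hcard : E.card = Nat.card H) : ↑E = (a + ·) '' (H : Set G) := by
  refine Set.eq_of_subset_of_ncard_le hsub ?_ (Set.toFinite _)
  rw [Set.ncard_image_of_injective _ (add_right_injective a), Set.ncard_coe_finset, hcard]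
  exact (Nat.card_coe_set_eq _).ge

namespace ZMod

lemma mem_zmultiples_natCast_iff {n p : ℕ} (h : p ∣ n) (x : ZMod n) :
    x ∈ AddSubgroup.zmultiples (p : ZMod n) ↔ castHom h (ZMod p) x = 0 := by
  constructor
  · rintro ⟨k, rfl⟩
    rw [map_zsmul, map_natCast, natCast_self, smul_zero]
  · intro hx
    obtain ⟨z, rfl⟩ := intCast_surjective x
    obtain ⟨k, rfl⟩ := (intCast_zmod_eq_zero_iff_dvd z p).1 (by simpa using hx)
    exact ⟨k, by push_cast; ring⟩

/-- The cosets of `⟨p⟩` in `ZMod (p * m)` are the `m * j + ⟨p⟩`, `j < p`; this is the `j` of `e`. -/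
def cosetIndex (p m : ℕ) (e : ZMod (p * m)) : ℕ :=
  (castHom (dvd_mul_right p m) (ZMod p) e * (m : ZMod p)⁻¹).val

section cosetIndex

variable {p m : ℕ} [Fact p.Prime]

lemma cosetIndex_lt (e : ZMod (p * m)) : cosetIndex p m e < p :=
  val_lt _

lemma natCast_ne_zero_of_coprime (hcop : p.Coprime m) : (m : ZMod p) ≠ 0 := by
  rw [Ne, natCast_eq_zero_iff]
  exact (Nat.Prime.coprime_iff_not_dvd Fact.out).1 hcop

lemma sub_mul_cosetIndex_mem (hcop : p.Coprime m) (e : ZMod (p * m)) :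
    e - m * cosetIndex p m e ∈ AddSubgroup.zmultiples (p : ZMod (p * m)) := by
  rw [mem_zmultiples_natCast_iff (dvd_mul_right p m), map_sub, map_mul, map_natCast,
    map_natCast, cosetIndex, natCast_zmod_val, mul_comm (m : ZMod p),
    inv_mul_cancel_right₀ (natCast_ne_zero_of_coprime hcop), sub_self]

lemma sub_mem_of_cosetIndex_eq (hcop : p.Coprime m) {e e' : ZMod (p * m)}
    (h : cosetIndex p m e = cosetIndex p m e') :
    e - e' ∈ AddSubgroup.zmultiples (p : ZMod (p * m)) := by
  rw [mem_zmultiples_natCast_iff (dvd_mul_right p m), map_sub, sub_eq_zero]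
  exact mul_right_cancel₀ (inv_ne_zero (natCast_ne_zero_of_coprime hcop)) (val_injective p h)

end cosetIndex

lemma isPrimitiveRoot_stdAddChar_natCast {N a b : ℕ} [NeZero N] (h : N = a * b) :
    IsPrimitiveRoot (stdAddChar (a : ZMod N)) b := by
  have hζ : IsPrimitiveRoot (stdAddChar (1 : ZMod N)) N := by
    have := stdAddChar_coe (N := N) 1
    push_cast at this
    rw [this, mul_one]
    exact Complex.isPrimitiveRoot_exp N (NeZero.ne N)
  rw [← nsmul_one a, AddChar.map_nsmul_eq_pow]
  exact hζ.pow (NeZero.pos N) h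

lemma stdAddChar_pow_eq_one {N : ℕ} [NeZero N] (x : ZMod N) : stdAddChar x ^ N = 1 := by
  rw [← AddChar.map_nsmul_eq_pow, nsmul_eq_mul, natCast_self, zero_mul, AddChar.map_zero_eq_one]

end ZMod

lemma zeta_eq_stdAddChar (n : ℕ) [NeZero n] : zeta n = ZMod.stdAddChar := by
  funext k
  rw [zeta, ZMod.stdAddChar_apply, ZMod.toCircle_apply]

lemma Polynomial.coeff_cyclotomic_prime (R : Type*) [Ring R] {p : ℕ} [Fact p.Prime] {i : ℕ}
    (hi : i < p) : (cyclotomic p R).coeff i = 1 := by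
  simp [cyclotomic_prime, coeff_X_pow, hi]

/-- The only `K`-linear relation among `1, ω, …, ω ^ (p - 1)` is `Φ_p(ω) = ∑ ω ^ i = 0`. -/
lemma eq_of_sum_mul_pow_eq_zero {K L ι : Type*} [Field K] [Field L] [Algebra K L]
    {p : ℕ} [Fact p.Prime] {ω : L} (hω : minpoly K ω = cyclotomic p K) {s : Finset ι}
    {k : ι → ℕ} (hk : Set.InjOn k s) (hkp : ∀ i ∈ s, k i < p) {c : ι → K}
    (h : ∑ i ∈ s, algebraMap K L (c i) * ω ^ k i = 0) {i j : ι} (hi : i ∈ s) (hj : j ∈ s) :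
    c i = c j := by
  set g : K[X] := ∑ i ∈ s, C (c i) * X ^ k i
  have hcoeff : ∀ i ∈ s, g.coeff (k i) = c i := by
    intro i hi
    rw [finsetSum_coeff, Finset.sum_eq_single i (fun j hj hji ↦ by
      rw [coeff_C_mul_X_pow, if_neg (hk.ne hi hj (Ne.symm hji))]) (absurd hi)]
    simp
  have hdvd : cyclotomic p K ∣ g := hω ▸ minpoly.dvd K ω (by simpa [g] using h)
  have hdeg : g.natDegree ≤ (cyclotomic p K).natDegree := by
    rw [natDegree_cyclotomic, Nat.totient_prime Fact.out]
    refine natDegree_sum_le_of_forall_le _ _ fun i hi ↦ (natDegree_C_mul_X_pow_le _ _).trans ?_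
    have := hkp i hi
    omega
  obtain ⟨r, hr⟩ : ∃ r, g = cyclotomic p K * C r :=
    ⟨_, eq_mul_leadingCoeff_of_monic_of_dvd_of_natDegree_le (cyclotomic.monic p K) hdvd hdeg⟩
  have hconst : ∀ i ∈ s, c i = r := fun i hi ↦ by
    rw [← hcoeff i hi, hr, coeff_mul_C, coeff_cyclotomic_prime K (hkp i hi), one_mul]
  rw [hconst i hi, hconst j hj]

/-- `[ℚ(x, y) : ℚ] = φ(a b) = φ(b) φ(a)` leaves room for no smaller degree of `y` over `ℚ(x)`. -/
lemma IsPrimitiveRoot.minpoly_adjoin_eq_cyclotomic_s5 {L : Type*} [Field L] [CharZero L]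
    {a b : ℕ} (ha : 0 < a) (hb : 0 < b) (hab : a.Coprime b) {x y : L}
    (hx : IsPrimitiveRoot x b) (hy : IsPrimitiveRoot y a) :
    minpoly ℚ⟮x⟯ y = cyclotomic a ℚ⟮x⟯ := by
  set K := ℚ⟮x⟯
  have hxℚ : IsIntegral ℚ x := (hx.isIntegral hb).tower_top
  have hyK : IsIntegral K y := (hy.isIntegral ha).tower_top
  have hdvd : minpoly K y ∣ cyclotomic a K := by
    refine minpoly.dvd K y ?_
    rw [aeval_def, eval₂_eq_eval_map, map_cyclotomic]
    exact hy.isRoot_cyclotomic ha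
  refine (eq_of_monic_of_dvd_of_natDegree_le (minpoly.monic hyK) (cyclotomic.monic a K) hdvd
    ?_).symm
  have : FiniteDimensional ℚ K := adjoin.finiteDimensional hxℚ
  have : FiniteDimensional K K⟮y⟯ := adjoin.finiteDimensional hyK
  have : FiniteDimensional ℚ K⟮y⟯ := FiniteDimensional.trans ℚ K K⟮y⟯
  have : Module.Free K K⟮y⟯ := Module.Free.of_divisionRing K _
  have hx' : IsPrimitiveRoot (⟨x, K⟮y⟯.algebraMap_mem ⟨x, mem_adjoin_simple_self ℚ x⟩⟩ : K⟮y⟯) b :=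
    (IsPrimitiveRoot.map_iff_of_injective (algebraMap K⟮y⟯ L).injective).1 hx
  have hy' : IsPrimitiveRoot (⟨y, mem_adjoin_simple_self K y⟩ : K⟮y⟯) a :=
    (IsPrimitiveRoot.map_iff_of_injective (algebraMap K⟮y⟯ L).injective).1 hy
  have hle := hx'.lcm_totient_le_finrank hy' (cyclotomic.irreducible_rat (Nat.lcm_pos hb ha))
  rw [hab.symm.lcm_eq_mul, Nat.totient_mul hab.symm, ← Module.finrank_mul_finrank ℚ K K⟮y⟯,
    adjoin.finrank hyK, adjoin.finrank hxℚ, ← cyclotomic_eq_minpoly_rat hx hb,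
    natDegree_cyclotomic] at hle
  rw [natDegree_cyclotomic]
  exact Nat.le_of_mul_le_mul_left hle (Nat.totient_pos.2 hb)

lemma ZMod.intCast_mul_stdAddChar_eq_of_sum_eq_zero {p m : ℕ} [Fact p.Prime] [NeZero (p * m)]
    (hcop : p.Coprime m) {E : Finset (ZMod (p * m))} (hE : Set.InjOn (cosetIndex p m) E)
    {ε : ZMod (p * m) → ℤ} (hsum : ∑ e ∈ E, (ε e : ℂ) * stdAddChar e = 0)
    {e e' : ZMod (p * m)} (he : e ∈ E) (he' : e' ∈ E) :
    (ε e : ℂ) * stdAddChar (e - m * cosetIndex p m e : ZMod (p * m)) =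
      ε e' * stdAddChar (e' - m * cosetIndex p m e' : ZMod (p * m)) := by
  set χ : AddChar (ZMod (p * m)) ℂ := stdAddChar
  have hm : 0 < m := Nat.pos_of_ne_zero (right_ne_zero_of_mul (NeZero.ne (p * m)))
  set K := ℚ⟮χ p⟯
  have hmin : minpoly K (χ m) = cyclotomic p K :=
    (isPrimitiveRoot_stdAddChar_natCast rfl).minpoly_adjoin_eq_cyclotomic_s5
      (Fact.out : p.Prime).pos hm hcop (isPrimitiveRoot_stdAddChar_natCast (mul_comm p m))
  have hK : ∀ x ∈ AddSubgroup.zmultiples (p : ZMod (p * m)), χ x ∈ K := by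
    rintro _ ⟨k, rfl⟩
    rw [AddChar.map_zsmul_eq_zpow]
    exact zpow_mem (mem_adjoin_simple_self ℚ _) k
  let w : ZMod (p * m) → K := fun e ↦
    ⟨χ (e - m * cosetIndex p m e), hK _ (sub_mul_cosetIndex_mem hcop e)⟩
  have hsumK : ∑ e ∈ E, algebraMap K ℂ (ε e * w e) * χ m ^ cosetIndex p m e = 0 := by
    rw [← hsum]
    refine Finset.sum_congr rfl fun e _ ↦ ?_
    rw [map_mul, map_intCast, mul_assoc, ← AddChar.map_nsmul_eq_pow]
    change _ * (χ _ * χ _) = _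
    rw [← AddChar.map_add_eq_mul, nsmul_eq_mul]
    congr 2
    ring
  simpa [w] using congrArg (algebraMap K ℂ)
    (eq_of_sum_mul_pow_eq_zero hmin hE (fun e _ ↦ cosetIndex_lt e) hsumK he he')

theorem stmt_5 (n p : ℕ) (hsf : Squarefree n) (hodd : Odd n)
    (hp : p.Prime) (hpn : p ∣ n)
    -- `Zm` is the subgroup of order `m = n / p`; `Zp` the subgroup of order `p`
    (Zm : Set (ZMod n)) (hZm : Zm = ↑(AddSubgroup.zmultiples ((p : ZMod n))))
    (Zp : Set (ZMod n)) (hZp : Zp = ↑(AddSubgroup.zmultiples (((n / p : ℕ) : ZMod n))))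
    (E : Finset (ZMod n))
    (hmeet : ∀ a : ZMod n, ((↑E : Set (ZMod n)) ∩ ((a + ·) '' Zm)).Subsingleton)
    (hcard : E.card = p)
    (hnotcoset : ¬ ∃ a : ZMod n, (↑E : Set (ZMod n)) = (a + ·) '' Zp) :
    Indep (zeta n '' ↑E) := by
  obtain ⟨m, rfl⟩ := hpn
  have : NeZero (p * m) := ⟨hsf.ne_zero⟩
  have : Fact p.Prime := ⟨hp⟩
  have hcop : p.Coprime m := (Nat.squarefree_mul_iff.1 hsf).1
  rw [Nat.mul_div_cancel_left m hp.pos] at hZp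
  subst hZm hZp
  have hE : Set.InjOn (ZMod.cosetIndex p m) E := fun e he e' he' h ↦
    hmeet e' ⟨he, e - e', ZMod.sub_mem_of_cosetIndex_eq hcop h, add_sub_cancel e' e⟩
      ⟨he', 0, zero_mem _, add_zero e'⟩
  rw [zeta_eq_stdAddChar]
  refine indep_image_of_injOn ZMod.injective_stdAddChar.injOn fun ε hsum ↦ ?_
  by_contra! ⟨e₀, he₀, hε₀⟩
  refine hnotcoset ⟨e₀, Finset.coe_eq_coset_of_subset_of_card_eq (fun e he ↦ ?_) ?_⟩
  · have hw := ZMod.injective_stdAddChar <| eq_of_intCast_mul_eq_intCast_mul hodd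
      (ZMod.stdAddChar_pow_eq_one _) (ZMod.stdAddChar_pow_eq_one _) hε₀
      (ZMod.intCast_mul_stdAddChar_eq_of_sum_eq_zero hcop hE hsum he₀ he)
    refine ⟨e - e₀, ⟨(ZMod.cosetIndex p m e : ℤ) - ZMod.cosetIndex p m e₀, ?_⟩,
      add_sub_cancel e₀ e⟩
    simp only [zsmul_eq_mul, Int.cast_sub, Int.cast_natCast]
    linear_combination hw
  · rw [hcard, Nat.card_zmultiples, ZMod.addOrderOf_coe _ (NeZero.ne _), Nat.gcd_mul_left_left,
      Nat.mul_div_cancel _ (Nat.pos_of_ne_zero (right_ne_zero_of_mul hsf.ne_zero))]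
end

section
/- Let n ≥ 2 be an integer and let p₁ be its smallest prime factor. Every subset E of the n-th roots of unity with #E < p₁ is independent over ℤ as a subset of ℂ. -/
/-!
Let `p` be a prime factor of `n = p * m` and `ζ` a primitive `n`-th root of unity. Over
`K = ℚ(ζ ^ p)` the degree of `ζ` is `φ(n) / φ(m) ≥ p - 1`, and `ζ` is a root of `X ^ p - ζ ^ p`.
So either no nonzero polynomial over `K` of degree `< p` vanishes at `ζ`, or the minimal polynomial
of `ζ` is `(X ^ p - b ^ p) / (X - b) = ∑ b ^ (p - 1 - j) X ^ j` with `b ∈ Kˣ`, and then every such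
polynomial has all `p` coefficients nonzero. Grouping a vanishing sum `∑ c_k ζ ^ k` of fewer than
`p` terms by `k mod p` gives such a polynomial, so each class sum `∑_{k ≡ r} c_k (ζ ^ p) ^ (k / p)`
vanishes; induction on `n`, with the primitive `m`-th root `ζ ^ p`, finishes the proof.
-/

open Polynomial IntermediateField Module

theorem Polynomial.coeff_ne_zero_of_mul_X_sub_C_eq {R : Type*} [CommRing R] [IsDomain R]
    {M : R[X]} {b : R} (hb : b ≠ 0) {p : ℕ} (h : M * (X - C b) = X ^ p - C (b ^ p))
    {i : ℕ} (hi : i < p) : M.coeff i ≠ 0 := by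
  have hM : M = ∑ j ∈ Finset.range p, C (b ^ (p - 1 - j)) * X ^ j := by
    refine mul_right_cancel₀ (X_sub_C_ne_zero b) ?_
    simp only [h, C_pow, mul_comm (C b ^ _), geom_sum₂_mul]
  rw [hM, finsetSum_coeff]
  simp only [coeff_C_mul_X_pow, Finset.sum_ite_eq, Finset.mem_range, if_pos hi]
  exact pow_ne_zero _ hb

section

variable {K L : Type*} [Field K] [Field L] [Algebra K L] {x : L} {a : K} {p : ℕ}

theorem minpoly.coeff_ne_zero_of_pow_eq_algebraMap (hx : x ≠ 0) (hxa : x ^ p = algebraMap K L a)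
    (hdeg : (minpoly K x).natDegree = p - 1) {i : ℕ} (hi : i < p) :
    (minpoly K x).coeff i ≠ 0 := by
  have hp : p ≠ 0 := by omega
  have hroot : Polynomial.aeval x (X ^ p - C a) = 0 := by simp [hxa]
  have hint : IsIntegral K x :=
    IsAlgebraic.isIntegral ⟨_, X_pow_sub_C_ne_zero (Nat.pos_of_ne_zero hp) a, hroot⟩
  obtain ⟨Q, hQ⟩ := minpoly.dvd K x hroot
  have hQmonic : Q.Monic := (minpoly.monic hint).of_mul_monic_left (hQ ▸ monic_X_pow_sub_C a hp)
  have hQdeg : Q.natDegree = 1 := by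
    have := congrArg natDegree hQ
    rw [natDegree_X_pow_sub_C, natDegree_mul (minpoly.ne_zero hint) hQmonic.ne_zero, hdeg] at this
    omega
  set b := -Q.coeff 0
  have hQb : Q = X - C b := by rw [hQmonic.eq_X_add_C hQdeg]; simp [b]
  have hba : b ^ p = a := by simpa [hQb, sub_eq_zero] using congrArg (eval b) hQ
  have hb : b ≠ 0 := by
    rintro hb
    rw [hb, zero_pow hp] at hba
    exact hx (pow_eq_zero_iff hp |>.mp (by rw [hxa, ← hba, map_zero]))
  exact coeff_ne_zero_of_mul_X_sub_C_eq hb (by rw [hba, ← hQb, hQ]) hi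

theorem Polynomial.coeff_ne_zero_of_aeval_eq_zero_of_pow_eq_algebraMap (hx : x ≠ 0)
    (hxa : x ^ p = algebraMap K L a) (hdeg : p - 1 ≤ (minpoly K x).natDegree) {g : K[X]}
    (hg : g ≠ 0) (hgp : g.natDegree < p) (hgx : aeval x g = 0) {i : ℕ} (hi : i < p) :
    g.coeff i ≠ 0 := by
  have hint : IsIntegral K x := IsAlgebraic.isIntegral ⟨g, hg, hgx⟩
  obtain ⟨q, hq⟩ := minpoly.dvd K x hgx
  have hq0 : q ≠ 0 := by rintro rfl; exact hg (by rw [hq, mul_zero])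
  have hMdeg : (minpoly K x).natDegree = p - 1 :=
    le_antisymm ((natDegree_le_of_dvd ⟨q, hq⟩ hg).trans (by omega)) hdeg
  have hqdeg : q.natDegree = 0 := by
    have := congrArg natDegree hq
    rw [natDegree_mul (minpoly.ne_zero hint) hq0] at this
    omega
  rw [hq, eq_C_of_natDegree_eq_zero hqdeg, coeff_mul_C]
  refine mul_ne_zero (minpoly.coeff_ne_zero_of_pow_eq_algebraMap hx hxa hMdeg hi) fun h ↦ hq0 ?_
  rw [eq_C_of_natDegree_eq_zero hqdeg, h, map_zero]

theorem sum_filter_eq_zero_of_sum_mul_pow_eq_zero {ι : Type*} (hx : x ≠ 0)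
    (hxa : x ^ p = algebraMap K L a) (hdeg : p - 1 ≤ (minpoly K x).natDegree) {s : Finset ι}
    (hcard : s.card < p) (b : ι → K) (e : ι → ℕ) (he : ∀ i ∈ s, e i < p)
    (h : ∑ i ∈ s, algebraMap K L (b i) * x ^ e i = 0) (r : ℕ) :
    ∑ i ∈ s with e i = r, b i = 0 := by
  set g : K[X] := ∑ i ∈ s, C (b i) * X ^ e i
  have hcoeff (j : ℕ) : g.coeff j = ∑ i ∈ s with e i = j, b i := by
    simp only [g, finsetSum_coeff, coeff_C_mul_X_pow, Finset.sum_filter, eq_comm]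
  suffices g = 0 by rw [← hcoeff, this, coeff_zero]
  by_contra hg
  have hsupp : g.support ⊆ s.image e := fun j hj ↦ by
    obtain ⟨i, hi, -⟩ := Finset.exists_ne_zero_of_sum_ne_zero (hcoeff j ▸ mem_support_iff.mp hj)
    rw [Finset.mem_filter] at hi
    exact Finset.mem_image.mpr ⟨i, hi⟩
  have hgp : g.natDegree < p := by
    refine (natDegree_sum_le_of_forall_le s _ fun i hi ↦ ?_).trans_lt
      (Nat.sub_one_lt_of_lt hcard)
    exact (natDegree_C_mul_X_pow_le _ _).trans (Nat.le_sub_one_of_lt (he i hi))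
  have hgx : Polynomial.aeval x g = 0 := by simpa [g, map_sum] using h
  have hcard' : g.support.card < (Finset.range p).card :=
    ((Finset.card_le_card hsupp).trans Finset.card_image_le).trans_lt (by simpa using hcard)
  obtain ⟨j, hj, hjg⟩ := Finset.exists_mem_notMem_of_card_lt_card hcard'
  exact coeff_ne_zero_of_aeval_eq_zero_of_pow_eq_algebraMap hx hxa hdeg hg hgp hgx
    (Finset.mem_range.mp hj) (notMem_support_iff.mp hjg)

end

theorem IsPrimitiveRoot.totient_le_natDegree_minpoly_adjoin_pow {L : Type*} [Field L]
    [CharZero L] {d m : ℕ} (hm : 0 < m) {ζ : L} (hζ : IsPrimitiveRoot ζ (d * m)) :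
    d.totient ≤ (minpoly ℚ⟮ζ ^ d⟯ ζ).natDegree := by
  obtain rfl | hd := d.eq_zero_or_pos
  · simp
  have hζd : IsPrimitiveRoot (ζ ^ d) m := hζ.pow (by positivity) rfl
  have hζint : IsIntegral ℚ ζ := (hζ.isIntegral (by positivity)).tower_top
  have hle : ℚ⟮ζ ^ d⟯ ≤ ℚ⟮ζ⟯ := adjoin_simple_le_iff.mpr (pow_mem (mem_adjoin_simple_self ℚ ζ) d)
  have htower : finrank ℚ ℚ⟮ζ ^ d⟯ * finrank ℚ⟮ζ ^ d⟯ ℚ⟮ζ ^ d⟯⟮ζ⟯ = finrank ℚ ℚ⟮ζ⟯ := by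
    rw [finrank_mul_finrank, ← sup_eq_right.mpr hle, ← restrictScalars_adjoin_eq_sup]
    rfl
  rw [adjoin.finrank hζint.tower_top, adjoin.finrank (hζd.isIntegral hm).tower_top,
    adjoin.finrank hζint, ← cyclotomic_eq_minpoly_rat hζd hm,
    ← cyclotomic_eq_minpoly_rat hζ (by positivity), natDegree_cyclotomic,
    natDegree_cyclotomic] at htower
  have hφ := Nat.totient_super_multiplicative d m
  have hφm : 0 < m.totient := Nat.totient_pos.mpr hm
  nlinarith

theorem IsPrimitiveRoot.sum_filter_mod_eq_zero {L ι : Type*} [Field L] [CharZero L] {p m : ℕ}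
    (hp : p.Prime) (hm : 0 < m) {ζ : L} (hζ : IsPrimitiveRoot ζ (p * m)) {s : Finset ι}
    (hcard : s.card < p) (c : ι → ℚ) (e : ι → ℕ) (h : ∑ i ∈ s, (c i : L) * ζ ^ e i = 0)
    (r : ℕ) : ∑ i ∈ s with e i % p = r, (c i : L) * (ζ ^ p) ^ (e i / p) = 0 := by
  set ω := AdjoinSimple.gen ℚ (ζ ^ p)
  have hω : (ω : L) = ζ ^ p := AdjoinSimple.coe_gen ℚ (ζ ^ p)
  have hdeg : p - 1 ≤ (minpoly ℚ⟮ζ ^ p⟯ ζ).natDegree :=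
    Nat.totient_prime hp ▸ hζ.totient_le_natDegree_minpoly_adjoin_pow hm
  have := sum_filter_eq_zero_of_sum_mul_pow_eq_zero (hζ.ne_zero (Nat.mul_pos hp.pos hm).ne')
    (AdjoinSimple.algebraMap_gen ℚ (ζ ^ p)).symm hdeg
    hcard (fun i ↦ (c i : ℚ⟮ζ ^ p⟯) * ω ^ (e i / p)) (e · % p) (fun i _ ↦ Nat.mod_lt _ hp.pos)
    ?_ r
  · simpa [map_sum, hω] using congrArg (algebraMap ℚ⟮ζ ^ p⟯ L) this
  · rw [← h]
    refine Finset.sum_congr rfl fun i _ ↦ ?_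
    simp [hω, mul_assoc, ← pow_mul, ← pow_add, Nat.div_add_mod]

-- Bounded by every prime factor of `n` rather than by `n.minFac`: the induction passes through
-- `n = 1`, where `Nat.minFac 1 = 1`.
theorem IsPrimitiveRoot.eq_zero_of_sum_mul_pow_eq_zero {L ι : Type*} [Field L] [CharZero L]
    {n : ℕ} {ζ : L} (hζ : IsPrimitiveRoot ζ n) {s : Finset ι} {e : ι → ℕ}
    (he : Set.InjOn e s) (hen : ∀ i ∈ s, e i < n) (hcard : ∀ q, q.Prime → q ∣ n → s.card < q)
    (c : ι → ℚ) (h : ∑ i ∈ s, (c i : L) * ζ ^ e i = 0) : ∀ i ∈ s, c i = 0 := by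
  induction n using Nat.strong_induction_on generalizing ζ s e with
  | _ n ih =>
  intro i hi
  by_cases hn : n = 1
  · have hs : s = {i} := Finset.eq_singleton_iff_unique_mem.mpr
      ⟨hi, fun j hj ↦ he hj hi (by have := hen j hj; have := hen i hi; omega)⟩
    have he0 : e i = 0 := by have := hen i hi; omega
    simpa [hs, he0] using h
  obtain ⟨p, hp, m, rfl⟩ := Nat.exists_prime_and_dvd hn
  have hm : 0 < m := Nat.pos_of_ne_zero (by rintro rfl; have := hen i hi; omega)
  have hclass := hζ.sum_filter_mod_eq_zero hp hm (hcard p hp (dvd_mul_right p m)) c e h (e i % p)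
  refine ih m (lt_mul_left hm hp.one_lt) (hζ.pow (Nat.mul_pos hp.pos hm) rfl) ?_ ?_ ?_ hclass
    i (Finset.mem_filter.mpr ⟨hi, rfl⟩)
  · intro j hj k hk hjk
    rw [Finset.mem_coe, Finset.mem_filter] at hj hk
    refine he hj.1 hk.1 ?_
    rw [← Nat.div_add_mod (e j) p, ← Nat.div_add_mod (e k) p, hj.2, hk.2]
    simp only [hjk]
  · intro j hj
    exact Nat.div_lt_of_lt_mul (hen j (Finset.mem_filter.mp hj).1)
  · intro q hq hqm
    exact (Finset.card_filter_le _ _).trans_lt (hcard q hq (dvd_mul_of_dvd_right hqm p))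

theorem IsPrimitiveRoot.eq_zero_of_sum_mul_eq_zero {L : Type*} [Field L] [CharZero L]
    {n : ℕ} [NeZero n] {ζ : L} (hζ : IsPrimitiveRoot ζ n) {s : Finset L}
    (hs : ∀ z ∈ s, z ^ n = 1) (hcard : s.card < n.minFac) (c : L → ℚ)
    (h : ∑ z ∈ s, (c z : L) * z = 0) : ∀ z ∈ s, c z = 0 := by
  choose! e hen he using fun z hz ↦ hζ.eq_pow_of_pow_eq_one (hs z hz)
  refine hζ.eq_zero_of_sum_mul_pow_eq_zero (fun z hz w hw hzw ↦ ?_) hen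
    (fun q hq hqn ↦ hcard.trans_le (Nat.minFac_le_of_dvd hq.two_le hqn)) c ?_
  · rw [← he z hz, ← he w hw, hzw]
  · rw [← h]
    exact Finset.sum_congr rfl fun z hz ↦ by rw [he z hz]

theorem stmt_6 (n : ℕ) (hn : 2 ≤ n) (E : Finset ℂ)
    (hroots : ∀ z ∈ E, z ^ n = 1) (hcard : E.card < n.minFac) :
    Indep ↑E := by
  intro s ε hsE hsum z hz
  have : NeZero n := ⟨by omega⟩
  have := (Complex.isPrimitiveRoot_exp n (NeZero.ne n)).eq_zero_of_sum_mul_eq_zero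
    (s := s) (fun w hw ↦ hroots w (hsE hw)) ((Finset.card_le_card hsE).trans_lt hcard)
    (fun w ↦ ε w) (by simpa using hsum) z hz
  exact_mod_cast this
end

section
/- Let p₁ < p₂ be the two smallest prime factors of a square-free odd integer n with at least two prime factors. The set E = (T_{p₁} ∪ T_{p₂}) \ {1}, consisting of all p₁-th and p₂-th roots of unity other than 1, is not quasi-independent, and #E = p₁ + p₂ − 2. -/
open Polynomial Finset

theorem not_quasiIndep_of_sum_eq_sum {S : Set ℂ} {A B : Finset ℂ} (hAB : Disjoint A B)
    (hA : A.Nonempty) (hS : ↑(A ∪ B) ⊆ S) (hsum : ∑ z ∈ A, z = ∑ z ∈ B, z) :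
    ¬ QuasiIndep S := by
  classical
  intro hQI
  let ε : ℂ → ℤ := fun z => if z ∈ A then 1 else if z ∈ B then -1 else 0
  have hε_signs : ∀ z ∈ A ∪ B, ε z = 0 ∨ ε z = 1 ∨ ε z = -1 := by
    intro z _
    by_cases hzA : z ∈ A <;> by_cases hzB : z ∈ B <;> simp [ε, hzA, hzB]
  have hε_sum : ∑ z ∈ A ∪ B, (ε z : ℂ) * z = 0 := by
    have hεA : ∀ z ∈ A, (ε z : ℂ) * z = z := fun z hz => by simp [ε, hz]
    have hεB : ∀ z ∈ B, (ε z : ℂ) * z = -z := fun z hz => by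
      simp [ε, hz, disjoint_right.mp hAB hz]
    rw [sum_union hAB, sum_congr rfl hεA, sum_congr rfl hεB, sum_neg_distrib, hsum,
      add_neg_cancel]
  obtain ⟨a, ha⟩ := hA
  have := hQI _ ε hS hε_signs hε_sum a (mem_union_left B ha)
  simp [ε, ha] at this

namespace IsPrimitiveRoot

variable {R : Type*} [CommRing R] [IsDomain R] {ζ : R} {k : ℕ}

theorem sum_nthRootsFinset_eq_zero (hζ : IsPrimitiveRoot ζ k) (hk : 1 < k) :
    ∑ z ∈ nthRootsFinset k (1 : R), z = 0 := by
  classical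
  have hval : (nthRootsFinset k (1 : R)).val = nthRoots k 1 := by
    rw [nthRootsFinset_def, Multiset.toFinset_val, Multiset.dedup_eq_self.mpr hζ.nthRoots_one_nodup]
  rw [sum_eq_multiset_sum, hval, hζ.nthRoots_eq (one_pow k), Multiset.map_map]
  simp only [Function.comp_def, mul_one]
  exact hζ.geom_sum_eq_zero hk

theorem sum_nthRootsFinset_erase_one [DecidableEq R] (hζ : IsPrimitiveRoot ζ k) (hk : 1 < k) :
    ∑ z ∈ (nthRootsFinset k (1 : R)).erase 1, z = -1 := by
  have h := add_sum_erase _ (fun z => z) (one_mem_nthRootsFinset (R := R) (by omega : 0 < k))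
  rw [sum_nthRootsFinset_eq_zero hζ hk] at h
  linear_combination h

theorem card_nthRootsFinset_erase_one [DecidableEq R] (hζ : IsPrimitiveRoot ζ k) (hk : 0 < k) :
    ((nthRootsFinset k (1 : R)).erase 1).card = k - 1 := by
  rw [card_erase_of_mem (one_mem_nthRootsFinset hk), hζ.card_nthRootsFinset]

end IsPrimitiveRoot

theorem disjoint_nthRootsFinset_erase_one {R : Type*} [CommRing R] [IsDomain R] [DecidableEq R]
    {p q : ℕ} (hpq : p.Coprime q) :
    Disjoint ((nthRootsFinset p (1 : R)).erase 1) ((nthRootsFinset q (1 : R)).erase 1) := by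
  rw [disjoint_left]
  intro z hzp hzq
  rw [mem_erase, mem_nthRootsFinset (Nat.pos_of_ne_zero (by rintro rfl; simp at hzp))] at hzp
  rw [mem_erase, mem_nthRootsFinset (Nat.pos_of_ne_zero (by rintro rfl; simp at hzq))] at hzq
  have hz : z ^ p.gcd q = 1 := pow_gcd_eq_one.mpr ⟨hzp.2, hzq.2⟩
  exact hzp.1 (by rwa [hpq, pow_one] at hz)

theorem stmt_8_general (p₁ p₂ : ℕ)
    (hp₁ : p₁.Prime) (hp₂ : p₂.Prime) (hlt : p₁ < p₂)
    (E : Set ℂ)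
    (hE : E = ({z : ℂ | z ^ p₁ = 1} ∪ {z : ℂ | z ^ p₂ = 1}) \ {1}) :
    ¬ QuasiIndep E ∧ E.ncard = p₁ + p₂ - 2 := by
  have hζ₁ := Complex.isPrimitiveRoot_exp p₁ hp₁.ne_zero
  have hζ₂ := Complex.isPrimitiveRoot_exp p₂ hp₂.ne_zero
  set F₁ := (nthRootsFinset p₁ (1 : ℂ)).erase 1
  set F₂ := (nthRootsFinset p₂ (1 : ℂ)).erase 1
  have hdisj : Disjoint F₁ F₂ :=
    disjoint_nthRootsFinset_erase_one ((Nat.coprime_primes hp₁ hp₂).mpr hlt.ne)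
  have hcard₁ : F₁.card = p₁ - 1 := hζ₁.card_nthRootsFinset_erase_one hp₁.pos
  have hcard₂ : F₂.card = p₂ - 1 := hζ₂.card_nthRootsFinset_erase_one hp₂.pos
  have hEF : E = ↑(F₁ ∪ F₂) := by
    rw [hE, coe_union, coe_erase, coe_erase, nthRootsFinset_toSet hp₁.pos (1 : ℂ),
      nthRootsFinset_toSet hp₂.pos (1 : ℂ), Set.union_sdiff_distrib]
  refine ⟨not_quasiIndep_of_sum_eq_sum hdisj ?_ hEF.superset ?_, ?_⟩
  · exact card_pos.mp (by rw [hcard₁]; have := hp₁.two_le; omega)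
  · rw [hζ₁.sum_nthRootsFinset_erase_one hp₁.one_lt, hζ₂.sum_nthRootsFinset_erase_one hp₂.one_lt]
  · rw [hEF, Set.ncard_coe_finset, card_union_of_disjoint hdisj, hcard₁, hcard₂]
    have := hp₁.two_le
    omega

theorem stmt_8 (n p₁ p₂ : ℕ) (hsf : Squarefree n) (hodd : Odd n)
    (hp₁ : p₁.Prime) (hp₂ : p₂.Prime) (h₁n : p₁ ∣ n) (h₂n : p₂ ∣ n) (hlt : p₁ < p₂)
    (hmin₁ : ∀ r : ℕ, r.Prime → r ∣ n → p₁ ≤ r)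
    (hmin₂ : ∀ r : ℕ, r.Prime → r ∣ n → r ≠ p₁ → p₂ ≤ r)
    (E : Set ℂ)
    (hE : E = ({z : ℂ | z ^ p₁ = 1} ∪ {z : ℂ | z ^ p₂ = 1}) \ {1}) :
    ¬ QuasiIndep E ∧ E.ncard = p₁ + p₂ - 2 :=
  stmt_8_general p₁ p₂ hp₁ hp₂ hlt E hE
end

section
/- Let n = p₁⋯p_K with primes p₁ < ⋯ < p_K, fix s, let q be a prime with q > p_s and q ∉ {p_{s+1},…,p_K}, and set m = n/p_s. If Ψ(n) ≥ (p_s − 1)·Ψ(m) + Δ for some Δ ≥ 0, then Ψ(qm) ≥ (q − 1)·Ψ(m) + Δ. -/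
open Complex Polynomial Finset

noncomputable section StmtAux

/-- helper: powers of a root of unity depend only on exponent mod n -/
lemma aux_pow_modEq {x : ℂ} {n a b : ℕ} (h : x ^ n = 1) (hab : a ≡ b [MOD n]) :
    x ^ a = x ^ b := by
  rw [← Nat.mod_add_div a n, ← Nat.mod_add_div b n, pow_add, pow_add, pow_mul, pow_mul, h,
    one_pow, one_pow, mul_one, mul_one, (hab : a % n = b % n)]

lemma aux_eq_one_of_coprime {x : ℂ} {r s : ℕ} (hr : x ^ r = 1) (hs : x ^ s = 1)
    (hco : Nat.Coprime r s) : x = 1 := by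
  have h1 : orderOf x ∣ r := orderOf_dvd_of_pow_eq_one hr
  have h2 : orderOf x ∣ s := orderOf_dvd_of_pow_eq_one hs
  exact orderOf_eq_one_iff.mp (Nat.dvd_one.mp (hco ▸ Nat.dvd_gcd h1 h2))

lemma aux_decomp_unique_le {ρ : ℂ} {r s : ℕ} (hρ : IsPrimitiveRoot ρ r) (hr : 0 < r)
    (hco : Nat.Coprime r s) {a b : ℕ} {w w' : ℂ} (hw : w ^ s = 1) (hw' : w' ^ s = 1)
    (ha : a < r) (hba : b ≤ a) (heq : ρ ^ a * w = ρ ^ b * w') : a = b ∧ w = w' := by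
  have hρ0 : ρ ≠ 0 := hρ.ne_zero hr.ne'
  have hx : ρ ^ b * (ρ ^ (a - b) * w) = ρ ^ b * w' := by
    rw [← mul_assoc, ← pow_add, Nat.add_sub_cancel' hba, heq]
  have hx2 : ρ ^ (a - b) * w = w' := mul_left_cancel₀ (pow_ne_zero _ hρ0) hx
  have h1 : (ρ ^ (a - b)) ^ r = 1 := by
    rw [← pow_mul, mul_comm, pow_mul, hρ.pow_eq_one, one_pow]
  have h2 : (ρ ^ (a - b)) ^ s = 1 := by
    have := congrArg (· ^ s) hx2
    simp only [mul_pow, hw, hw', mul_one] at this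
    exact this
  have hone : ρ ^ (a - b) = 1 := aux_eq_one_of_coprime h1 h2 hco
  have hdvd : r ∣ a - b := hρ.dvd_of_pow_eq_one _ hone
  have hab : a - b = 0 := Nat.eq_zero_of_dvd_of_lt hdvd (lt_of_le_of_lt (Nat.sub_le _ _) ha) |>.symm ▸ rfl
  constructor
  · omega
  · rw [← hx2, hab, pow_zero, one_mul]

lemma aux_decomp_unique {ρ : ℂ} {r s : ℕ} (hρ : IsPrimitiveRoot ρ r) (hr : 0 < r)
    (hco : Nat.Coprime r s) {a b : ℕ} {w w' : ℂ} (hw : w ^ s = 1) (hw' : w' ^ s = 1)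
    (ha : a < r) (hb : b < r) (heq : ρ ^ a * w = ρ ^ b * w') : a = b ∧ w = w' := by
  rcases le_total b a with h | h
  · exact aux_decomp_unique_le hρ hr hco hw hw' ha h heq
  · obtain ⟨h1, h2⟩ := aux_decomp_unique_le hρ hr hco hw' hw hb h heq.symm
    exact ⟨h1.symm, h2.symm⟩

end StmtAux

lemma aux_exp_pow (a b : ℕ) (ha : a ≠ 0) (hb : b ≠ 0) :
    Complex.exp (2 * Real.pi * Complex.I / (a * b : ℕ)) ^ a
      = Complex.exp (2 * Real.pi * Complex.I / b) := by
  rw [← Complex.exp_nat_mul]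
  congr 1
  have ha' : (a : ℂ) ≠ 0 := Nat.cast_ne_zero.mpr ha
  have hb' : (b : ℂ) ≠ 0 := Nat.cast_ne_zero.mpr hb
  push_cast
  field_simp

lemma aux_decomp_exists {r s : ℕ} (hr : 0 < r) (hs : 0 < s) (hco : Nat.Coprime r s) {z : ℂ}
    (hz : z ^ (r * s) = 1) :
    ∃ ak : ℕ × ℕ, ak.1 < r ∧ ak.2 < s ∧
      z = (Complex.exp (2 * Real.pi * Complex.I / (r * s : ℕ)) ^ s) ^ ak.1 *
          (Complex.exp (2 * Real.pi * Complex.I / (r * s : ℕ)) ^ r) ^ ak.2 := by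
  haveI : NeZero r := ⟨hr.ne'⟩
  haveI : NeZero s := ⟨hs.ne'⟩
  haveI : NeZero (r * s) := ⟨Nat.mul_ne_zero hr.ne' hs.ne'⟩
  set ρ : ℂ := Complex.exp (2 * Real.pi * Complex.I / (r * s : ℕ)) with hρdef
  have hρ : IsPrimitiveRoot ρ (r * s) := Complex.isPrimitiveRoot_exp _ (Nat.mul_ne_zero hr.ne' hs.ne')
  obtain ⟨k0, hk0lt, hk0⟩ := hρ.eq_pow_of_pow_eq_one hz
  set uS : (ZMod r)ˣ := ZMod.unitOfCoprime s hco.symm with huS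
  set uR : (ZMod s)ˣ := ZMod.unitOfCoprime r hco with huR
  set a : ℕ := (((k0 : ZMod r)) * ((uS⁻¹ : (ZMod r)ˣ) : ZMod r)).val with hadef
  set k : ℕ := (((k0 : ZMod s)) * ((uR⁻¹ : (ZMod s)ˣ) : ZMod s)).val with hkdef
  have ha : a < r := ZMod.val_lt _
  have hk : k < s := ZMod.val_lt _
  have hmodr : (s * a + r * k) ≡ k0 [MOD r] := by
    have : ((s * a + r * k : ℕ) : ZMod r) = ((k0 : ℕ) : ZMod r) := by
      push_cast
      rw [ZMod.natCast_self, zero_mul, add_zero, ZMod.natCast_val, ZMod.cast_id]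
      rw [← ZMod.coe_unitOfCoprime s hco.symm, ← huS]
      rw [mul_comm (uS : ZMod r), mul_assoc, ← Units.val_mul, inv_mul_cancel, Units.val_one, mul_one]
    exact (ZMod.natCast_eq_natCast_iff _ _ _).mp this
  have hmods : (s * a + r * k) ≡ k0 [MOD s] := by
    have : ((s * a + r * k : ℕ) : ZMod s) = ((k0 : ℕ) : ZMod s) := by
      push_cast
      rw [ZMod.natCast_self, zero_mul, zero_add, ZMod.natCast_val, ZMod.cast_id]
      rw [← ZMod.coe_unitOfCoprime r hco, ← huR]
      rw [mul_comm (uR : ZMod s), mul_assoc, ← Units.val_mul, inv_mul_cancel, Units.val_one, mul_one]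
    exact (ZMod.natCast_eq_natCast_iff _ _ _).mp this
  have hmod : (s * a + r * k) ≡ k0 [MOD r * s] :=
    (Nat.modEq_and_modEq_iff_modEq_mul hco).mp ⟨hmodr, hmods⟩
  refine ⟨(a, k), ha, hk, ?_⟩
  have : z = ρ ^ (s * a + r * k) := by
    rw [← hk0]
    exact (aux_pow_modEq hρ.pow_eq_one hmod).symm
  rw [this, pow_add, pow_mul, pow_mul]


lemma psi_bddAbove (N : ℕ) (hN : 0 < N) :
    BddAbove {k | ∃ E : Finset ℂ, (∀ z ∈ E, z ^ N = 1) ∧ QuasiIndep ↑E ∧ E.card = k} := by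
  refine ⟨N, ?_⟩
  rintro k ⟨E, hE, -, rfl⟩
  have hsub : E ⊆ Polynomial.nthRootsFinset N (1 : ℂ) := fun z hz =>
    (Polynomial.mem_nthRootsFinset hN (1 : ℂ)).2 (hE z hz)
  calc E.card ≤ (Polynomial.nthRootsFinset N (1 : ℂ)).card := Finset.card_le_card hsub
    _ = N := (Complex.isPrimitiveRoot_exp N hN.ne').card_nthRootsFinset

lemma psi_witness (N : ℕ) (hN : 0 < N) :
    ∃ E : Finset ℂ, (∀ z ∈ E, z ^ N = 1) ∧ QuasiIndep ↑E ∧ E.card = Psi N := by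
  have hne : {k | ∃ E : Finset ℂ, (∀ z ∈ E, z ^ N = 1) ∧ QuasiIndep ↑E ∧ E.card = k}.Nonempty := by
    refine ⟨0, ∅, by simp, ?_, by simp⟩
    intro s ε hsub _ _ z hz
    exact absurd (hsub hz) (by simp)
  have := Nat.sSup_mem hne (psi_bddAbove N hN)
  obtain ⟨E, h1, h2, h3⟩ := this
  exact ⟨E, h1, h2, h3⟩

lemma le_psi (N : ℕ) (hN : 0 < N) (E : Finset ℂ) (hE : ∀ z ∈ E, z ^ N = 1)
    (hqi : QuasiIndep ↑E) : E.card ≤ Psi N :=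
  le_csSup (psi_bddAbove N hN) ⟨E, hE, hqi, rfl⟩

set_option maxHeartbeats 1000000 in
open IntermediateField in
lemma aux_lemmaA (q m : ℕ) (hq : q.Prime) (hm : 0 < m) (hqm : ¬ q ∣ m) (c : ℕ → ℂ)
    (hc : ∀ b, b < q → c b ∈ Submodule.span ℤ
      (Set.range fun k : ℕ => Complex.exp (2 * Real.pi * Complex.I / (q * m : ℕ)) ^ (q * k)))
    (hrel : ∑ b ∈ Finset.range q, c b *
      Complex.exp (2 * Real.pi * Complex.I / (q * m : ℕ)) ^ (m * b) = 0) :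
    ∀ b, b < q → ∀ b', b' < q → c b = c b' := by
  have hq1 : 1 < q := hq.one_lt
  have hN0 : q * m ≠ 0 := Nat.mul_ne_zero hq.pos.ne' hm.ne'
  have hNpos : 0 < q * m := Nat.pos_of_ne_zero hN0
  set ζ : ℂ := Complex.exp (2 * Real.pi * Complex.I / (q * m : ℕ)) with hζdef
  have hζ : IsPrimitiveRoot ζ (q * m) := Complex.isPrimitiveRoot_exp _ hN0
  have hζq : IsPrimitiveRoot (ζ ^ m) q := hζ.pow hNpos (mul_comm q m)
  have hco : Nat.Coprime m q := (hq.coprime_iff_not_dvd.mpr hqm).symm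
  have hint : IsIntegral ℚ ζ := (hζ.isIntegral hNpos).tower_top
  set L := ℚ⟮ζ⟯ with hLdef
  set zz : L := IntermediateField.AdjoinSimple.gen ℚ ζ with hzzdef
  have hzzval : algebraMap L ℂ zz = ζ := IntermediateField.AdjoinSimple.algebraMap_gen ℚ ζ
  set pb := IntermediateField.adjoin.powerBasis hint with hpbdef
  have hpbgen : pb.gen = zz := IntermediateField.adjoin.powerBasis_gen hint
  -- every element of the span has a preimage in L fixed by suitable algebra maps
  have hfix : ∀ x ∈ Submodule.span ℤ (Set.range fun k : ℕ => ζ ^ (q * k)),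
      ∃ xL : L, algebraMap L ℂ xL = x ∧
        ∀ σ : L →ₐ[ℚ] ℂ, σ (zz ^ q) = ζ ^ q → σ xL = x := by
    intro x hx
    induction hx using Submodule.span_induction with
    | mem x hxx =>
      obtain ⟨k, rfl⟩ := hxx
      refine ⟨zz ^ (q * k), ?_, fun σ hσ => ?_⟩
      · show algebraMap L ℂ (zz ^ (q * k)) = ζ ^ (q * k)
        rw [map_pow, hzzval]
      · show σ (zz ^ (q * k)) = ζ ^ (q * k)
        rw [pow_mul, map_pow, hσ, ← pow_mul]
    | zero => exact ⟨0, map_zero _, fun σ _ => map_zero σ⟩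
    | add x y hx hy ihx ihy =>
      obtain ⟨xL, hxL1, hxL2⟩ := ihx
      obtain ⟨yL, hyL1, hyL2⟩ := ihy
      exact ⟨xL + yL, by rw [map_add, hxL1, hyL1], fun σ hσ => by
        rw [map_add, hxL2 σ hσ, hyL2 σ hσ]⟩
    | smul n x hx ihx =>
      obtain ⟨xL, hxL1, hxL2⟩ := ihx
      exact ⟨n • xL, by rw [map_zsmul, hxL1], fun σ hσ => by rw [map_zsmul, hxL2 σ hσ]⟩
  -- choose preimages for the c b
  have hcL : ∀ b : ℕ, b < q → ∃ xL : L, algebraMap L ℂ xL = c b ∧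
      ∀ σ : L →ₐ[ℚ] ℂ, σ (zz ^ q) = ζ ^ q → σ xL = c b := fun b hb => hfix (c b) (hc b hb)
  choose cL hcL1 hcL2 using hcL
  classical
  set cL' : ℕ → L := fun b => if h : b < q then cL b h else 0 with hcL'def
  set RL : L := ∑ b ∈ Finset.range q, cL' b * zz ^ (m * b) with hRLdef
  have hRL0 : RL = 0 := by
    have : algebraMap L ℂ RL = 0 := by
      rw [hRLdef, map_sum]
      rw [← hrel]
      refine Finset.sum_congr rfl fun b hb => ?_
      have hb' : b < q := Finset.mem_range.mp hb
      rw [map_mul, map_pow, hzzval, hcL'def]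
      simp only [dif_pos hb']
      rw [hcL1 b hb']
    exact (algebraMap L ℂ).injective (by rw [this, map_zero])
  -- the twisted relations
  have key : ∀ u : ℕ, 0 < u → u < q →
      ∑ b ∈ Finset.range q, c b * (ζ ^ m) ^ (u * b) = 0 := by
    intro u hu0 huq
    obtain ⟨t, ht1, htu⟩ := Nat.chineseRemainder hco 1 u
    have hgt1 : Nat.gcd m t = 1 := by
      rw [Nat.gcd_rec, (ht1 : t % m = 1 % m), ← Nat.gcd_rec, Nat.gcd_one_right]
    have hgt2 : Nat.gcd q t = 1 := by
      rw [Nat.gcd_rec, (htu : t % q = u % q), ← Nat.gcd_rec]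
      exact (hq.coprime_iff_not_dvd.mpr (Nat.not_dvd_of_pos_of_lt hu0 huq))
    have hcopt : Nat.Coprime t (q * m) :=
      Nat.Coprime.mul_right (Nat.coprime_comm.mp hgt2) (Nat.coprime_comm.mp hgt1)
    have hroot : (Polynomial.aeval ((ζ : ℂ) ^ t)) (minpoly ℚ pb.gen) = 0 := by
      rw [hpbgen, hzzdef]
      erw [IntermediateField.minpoly_gen ℚ ζ]
      rw [← Polynomial.cyclotomic_eq_minpoly_rat hζ hNpos, Polynomial.aeval_def,
        Polynomial.eval₂_eq_eval_map, Polynomial.map_cyclotomic]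
      exact (hζ.pow_of_coprime t hcopt).isRoot_cyclotomic hNpos
    set σ : L →ₐ[ℚ] ℂ := pb.lift (ζ ^ t) hroot with hσdef
    have hσgen : σ zz = ζ ^ t := by rw [hσdef, ← hpbgen]; exact pb.lift_gen _ _
    have hσm : σ (zz ^ q) = ζ ^ q := by
      rw [map_pow, hσgen, ← pow_mul]
      refine aux_pow_modEq hζ.pow_eq_one ?_
      have h1 : t * q ≡ 1 * q [MOD m * q] := Nat.ModEq.mul_right' q ht1
      rw [Nat.mul_comm m q, one_mul] at h1
      exact h1
    have hσRL : σ RL = 0 := by rw [hRL0, map_zero]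
    rw [hRLdef, map_sum] at hσRL
    rw [← hσRL]
    refine Finset.sum_congr rfl fun b hb => ?_
    have hb' : b < q := Finset.mem_range.mp hb
    rw [map_mul, map_pow, hσgen, hcL'def]
    simp only [dif_pos hb']
    rw [hcL2 b hb' σ hσm]
    congr 1
    rw [← pow_mul, ← pow_mul]
    have hmb : t * (m * b) ≡ m * (u * b) [MOD q * m] := by
      calc t * (m * b) = t * m * b := by ring
        _ ≡ u * m * b [MOD q * m] := Nat.ModEq.mul_right b (Nat.ModEq.mul_right' m htu)
        _ = m * (u * b) := by ring
    exact aux_pow_modEq hζ.pow_eq_one hmb.symm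
  -- averaging
  have havg : ∀ b₀, b₀ < q → (q : ℂ) * c b₀ = ∑ b ∈ Finset.range q, c b := by
    intro b₀ hb₀
    have hS1 : ∑ u ∈ Finset.range q,
        (∑ b ∈ Finset.range q, c b * (ζ ^ m) ^ (u * b)) * (ζ ^ m) ^ (u * (q - b₀))
        = ∑ b ∈ Finset.range q, c b := by
      rw [Finset.sum_eq_single 0]
      · simp
      · intro u hu hne
        rw [key u (Nat.pos_of_ne_zero hne) (Finset.mem_range.mp hu), zero_mul]
      · intro h; exact absurd (Finset.mem_range.mpr hq.pos) h
    have hS2 : ∑ u ∈ Finset.range q,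
        (∑ b ∈ Finset.range q, c b * (ζ ^ m) ^ (u * b)) * (ζ ^ m) ^ (u * (q - b₀))
        = (q : ℂ) * c b₀ := by
      have hstep : ∀ u ∈ Finset.range q,
          (∑ b ∈ Finset.range q, c b * (ζ ^ m) ^ (u * b)) * (ζ ^ m) ^ (u * (q - b₀))
          = ∑ b ∈ Finset.range q, c b * (ζ ^ m) ^ (u * (b + (q - b₀))) := by
        intro u _
        rw [Finset.sum_mul]
        refine Finset.sum_congr rfl fun b _ => ?_
        rw [mul_assoc, ← pow_add, Nat.mul_add]
      rw [Finset.sum_congr rfl hstep, Finset.sum_comm]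
      have hinner : ∀ b ∈ Finset.range q,
          ∑ u ∈ Finset.range q, c b * (ζ ^ m) ^ (u * (b + (q - b₀)))
          = if b = b₀ then (q : ℂ) * c b₀ else 0 := by
        intro b hb
        have hbq : b < q := Finset.mem_range.mp hb
        rw [← Finset.mul_sum]
        by_cases hbb : b = b₀
        · subst hbb
          rw [if_pos rfl]
          have : ∀ u ∈ Finset.range q, (ζ ^ m) ^ (u * (b + (q - b))) = 1 := by
            intro u _
            have hexp : b + (q - b) = q := by omega
            rw [hexp, mul_comm u q, pow_mul, hζq.pow_eq_one, one_pow]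
          rw [Finset.sum_congr rfl this, Finset.sum_const, Finset.card_range]
          push_cast; ring
        · rw [if_neg hbb]
          set d := b + (q - b₀) with hd
          have hqd : ¬ q ∣ d := by
            intro hdvd
            have h1 : 0 < d := by omega
            have h2 : d < 2 * q := by omega
            rcases hdvd with ⟨e, he⟩
            have he2 : e < 2 := by nlinarith
            interval_cases e <;> omega
          have hcopd : Nat.Coprime d q := Nat.coprime_comm.mp (hq.coprime_iff_not_dvd.mpr hqd)
          have hprim : IsPrimitiveRoot ((ζ ^ m) ^ d) q := hζq.pow_of_coprime d hcopd
          have : ∑ u ∈ Finset.range q, (ζ ^ m) ^ (u * d) = 0 := by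
            rw [← hprim.geom_sum_eq_zero hq1]
            refine Finset.sum_congr rfl fun u _ => ?_
            rw [← pow_mul, ← pow_mul, ← pow_mul]
            congr 1
            ring
          rw [this, mul_zero]
      rw [Finset.sum_congr rfl hinner, Finset.sum_ite_eq' (Finset.range q) b₀]
      rw [if_pos (Finset.mem_range.mpr hb₀)]
    rw [← hS2, hS1]
  intro b hb b' hb'
  have hqne : (q : ℂ) ≠ 0 := Nat.cast_ne_zero.mpr hq.pos.ne'
  have := (havg b hb).trans (havg b' hb').symm
  exact mul_left_cancel₀ hqne this

set_option maxHeartbeats 1600000 in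
theorem stmt_17 (n p q m Δ : ℕ) (hn : 1 < n) (hsf : Squarefree n)
    (hp : p.Prime) (hpn : p ∣ n) (hm : m = n / p)
    (hq : q.Prime) (hpq : p < q) (hqm : ¬ q ∣ m)
    (hΨ : (p - 1) * Psi m + Δ ≤ Psi n) :
    (q - 1) * Psi m + Δ ≤ Psi (q * m) := by
  classical
  have hp2 : 2 ≤ p := hp.two_le
  have hq1 : 1 < q := hq.one_lt
  have hnpm : n = p * m := by rw [hm, Nat.mul_div_cancel' hpn]
  have hm0 : 0 < m := by
    rcases Nat.eq_zero_or_pos m with h | h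
    · subst h; omega
    · exact h
  have hpm' : ¬ p ∣ m := by
    rintro ⟨m', rfl⟩
    exact hp.not_isUnit (hsf p ⟨m', by rw [hnpm]; ring⟩)
  have hcop_pm : Nat.Coprime p m := hp.coprime_iff_not_dvd.mpr hpm'
  have hcop_qm : Nat.Coprime q m := hq.coprime_iff_not_dvd.mpr hqm
  have hn0 : 0 < n := by omega
  have hqm0 : 0 < q * m := Nat.mul_pos hq.pos hm0
  have hpm0 : 0 < p * m := Nat.mul_pos hp.pos hm0
  haveI : NeZero m := ⟨hm0.ne'⟩
  obtain ⟨E, hEroot, hEqi, hEcard⟩ := psi_witness n hn0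
  obtain ⟨G, hGroot, hGqi, hGcard⟩ := psi_witness m hm0
  -- roots of unity
  set ζ : ℂ := Complex.exp (2 * Real.pi * Complex.I / (q * m : ℕ)) with hζdef
  have hζ : IsPrimitiveRoot ζ (q * m) := Complex.isPrimitiveRoot_exp _ hqm0.ne'
  set ζq : ℂ := ζ ^ m with hζqdef
  set ζm : ℂ := ζ ^ q with hζmdef
  have hζq : IsPrimitiveRoot ζq q := hζ.pow hqm0 (mul_comm q m)
  have hζm : IsPrimitiveRoot ζm m := hζ.pow hqm0 rfl
  have hζmval : ζm = Complex.exp (2 * Real.pi * Complex.I / (m : ℕ)) := by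
    rw [hζmdef, hζdef]; exact aux_exp_pow q m hq.pos.ne' hm0.ne'
  set μ : ℂ := Complex.exp (2 * Real.pi * Complex.I / (p * m : ℕ)) with hμdef
  have hμ : IsPrimitiveRoot μ (p * m) := Complex.isPrimitiveRoot_exp _ hpm0.ne'
  set μp : ℂ := μ ^ m with hμpdef
  have hμp : IsPrimitiveRoot μp p := hμ.pow hpm0 (mul_comm p m)
  have hμm_eq : μ ^ p = ζm := by
    rw [hμdef, hζmval]; exact aux_exp_pow p m hp.pos.ne' hm0.ne'
  -- decomposition of elements of E
  have hdec : ∀ z : ℂ, z ∈ E → ∃ ak : ℕ × ℕ, ak.1 < p ∧ ak.2 < m ∧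
      z = μp ^ ak.1 * ζm ^ ak.2 := by
    intro z hz
    have hzpow : z ^ (p * m) = 1 := by rw [← hnpm]; exact hEroot z hz
    obtain ⟨ak, h1, h2, h3⟩ := aux_decomp_exists hp.pos hm0 hcop_pm hzpow
    rw [← hμdef, hμm_eq, ← hμpdef] at h3
    exact ⟨ak, h1, h2, h3⟩
  choose! dec hdec1 hdec2 hdec3 using hdec
  set A : ℂ → ℕ := fun z => (dec z).1 with hAdef
  set J : ℂ → ℕ := fun z => (dec z).2 with hJdef
  set φ : ℂ → ℂ := fun x => ζq ^ A x * ζm ^ J x with hφdef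
  set E' : Finset ℂ :=
    E.image φ ∪ (Finset.Ico p q).biUnion (fun b => G.image (fun w => ζq ^ b * w)) with hE'def
  -- basic root facts
  have hz1 : ∀ k : ℕ, (ζ ^ k) ^ (q * m) = 1 := by
    intro k; rw [← pow_mul, mul_comm k, pow_mul, hζ.pow_eq_one, one_pow]
  have hζmpow : ∀ j : ℕ, (ζm ^ j) ^ m = 1 := by
    intro j; rw [← pow_mul, mul_comm j, pow_mul, hζm.pow_eq_one, one_pow]
  have hwGpow : ∀ w ∈ G, w ^ m = 1 := hGroot
  -- uniqueness of (q, m) decompositions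
  have huq : ∀ (b b' : ℕ) (w w' : ℂ), w ^ m = 1 → w' ^ m = 1 → b < q → b' < q →
      ζq ^ b * w = ζq ^ b' * w' → b = b' ∧ w = w' := by
    intro b b' w w' hw hw' hb hb' heq
    exact aux_decomp_unique hζq hq.pos hcop_qm hw hw' hb hb' heq
  have hφz : ∀ z ∈ E, φ z = ζq ^ A z * ζm ^ J z := fun z _ => rfl
  have hzdec : ∀ z ∈ E, z = μp ^ A z * ζm ^ J z := fun z hz => hdec3 z hz
  -- injectivity of φ on E
  have hφinj : ∀ z ∈ E, ∀ z' ∈ E, φ z = φ z' → z = z' := by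
    intro z hz z' hz' heq
    obtain ⟨h1, h2⟩ := huq (A z) (A z') (ζm ^ J z) (ζm ^ J z') (hζmpow _) (hζmpow _)
      (lt_trans (hdec1 z hz) hpq) (lt_trans (hdec1 z' hz') hpq) heq
    rw [hzdec z hz, hzdec z' hz', h1, h2]
  have hζq0 : ∀ b : ℕ, (ζq : ℂ) ^ b ≠ 0 := fun b => pow_ne_zero _ (hζq.ne_zero hq.pos.ne')
  have hGinj : ∀ b : ℕ, ∀ w ∈ G, ∀ w' ∈ G, ζq ^ b * w = ζq ^ b * w' → w = w' := by
    intro b w _ w' _ h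
    exact mul_left_cancel₀ (hζq0 b) h
  -- disjointness
  have hdisjpieces : ∀ b ∈ Finset.Ico p q, ∀ b' ∈ Finset.Ico p q, b ≠ b' →
      Disjoint (G.image (fun w => ζq ^ b * w)) (G.image (fun w => ζq ^ b' * w)) := by
    intro b hb b' hb' hne
    rw [Finset.disjoint_left]
    rintro x hx hx'
    obtain ⟨w, hw, rfl⟩ := Finset.mem_image.mp hx
    obtain ⟨w', hw', heq⟩ := Finset.mem_image.mp hx'
    exact hne (huq b b' w w' (hwGpow w hw) (hwGpow w' hw')
      (Finset.mem_Ico.mp hb).2 (Finset.mem_Ico.mp hb').2 heq.symm).1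
  have hdisj1 : Disjoint (E.image φ)
      ((Finset.Ico p q).biUnion (fun b => G.image (fun w => ζq ^ b * w))) := by
    rw [Finset.disjoint_left]
    rintro x hx hx'
    obtain ⟨z, hz, rfl⟩ := Finset.mem_image.mp hx
    obtain ⟨b, hb, hxb⟩ := Finset.mem_biUnion.mp hx'
    obtain ⟨w, hw, heq⟩ := Finset.mem_image.mp hxb
    obtain ⟨hbp, hbq⟩ := Finset.mem_Ico.mp hb
    have h1 : b = A z := (huq b (A z) w (ζm ^ J z) (hwGpow w hw) (hζmpow _)
      hbq (lt_trans (hdec1 z hz) hpq) heq).1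
    have h2 : A z < p := hdec1 z hz
    omega
  -- cardinality
  have hE'card : E'.card = E.card + (q - p) * G.card := by
    rw [hE'def, Finset.card_union_of_disjoint hdisj1, Finset.card_image_of_injOn hφinj,
      Finset.card_biUnion hdisjpieces]
    congr 1
    have : ∀ b ∈ Finset.Ico p q, (G.image (fun w => ζq ^ b * w)).card = G.card := by
      intro b _
      exact Finset.card_image_of_injOn (fun w hw w' hw' h => hGinj b w hw w' hw' h)
    rw [Finset.sum_congr rfl this, Finset.sum_const, Nat.card_Ico, smul_eq_mul]
  -- roots of unity
  have hzpow1 : ∀ k : ℕ, (q * m) ∣ k → ζ ^ k = 1 := by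
    rintro k ⟨c, rfl⟩
    rw [pow_mul, hζ.pow_eq_one, one_pow]
  have hzq1 : ∀ k : ℕ, (ζq ^ k) ^ (q * m) = 1 := by
    intro k
    rw [hζqdef, ← pow_mul, ← pow_mul]
    exact hzpow1 _ ⟨m * k, by ring⟩
  have hzm1 : ∀ k : ℕ, (ζm ^ k) ^ (q * m) = 1 := by
    intro k
    rw [hζmdef, ← pow_mul, ← pow_mul]
    exact hzpow1 _ ⟨q * k, by ring⟩
  have hE'root : ∀ x ∈ E', x ^ (q * m) = 1 := by
    intro x hx
    rcases Finset.mem_union.mp hx with h | h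
    · obtain ⟨z, hz, rfl⟩ := Finset.mem_image.mp h
      rw [hφz z hz, mul_pow, hzq1, hzm1, one_mul]
    · obtain ⟨b, _, hxb⟩ := Finset.mem_biUnion.mp h
      obtain ⟨w, hw, rfl⟩ := Finset.mem_image.mp hxb
      rw [mul_pow, hzq1 b, one_mul, show q * m = m * q from mul_comm q m, pow_mul,
        hwGpow w hw, one_pow]
  -- quasi-independence of E'
  have hE'qi : QuasiIndep ↑E' := by
    intro s ε hsub hval hsum
    have hsE' : s ⊆ E' := Finset.coe_subset.mp hsub
    set ε' : ℂ → ℤ := fun x => if x ∈ s then ε x else 0 with hε'def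
    have hval' : ∀ x : ℂ, ε' x = 0 ∨ ε' x = 1 ∨ ε' x = -1 := by
      intro x
      rw [hε'def]
      by_cases hx : x ∈ s
      · simp only [if_pos hx]; exact hval x hx
      · simp [hx]
    have hsum' : ∑ z ∈ E', (ε' z : ℂ) * z = 0 := by
      have h1 : ∑ z ∈ s, (ε' z : ℂ) * z = ∑ z ∈ s, (ε z : ℂ) * z :=
        Finset.sum_congr rfl fun z hz => by rw [hε'def]; simp [hz]
      rw [← hsum, ← h1]
      exact (Finset.sum_subset hsE' (fun x _ hxs => by rw [hε'def]; simp [hxs])).symm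
    -- the fiber sums
    set c : ℕ → ℂ := fun b =>
      if b < p then ∑ z ∈ E.filter (fun z => A z = b), (ε' (φ z) : ℂ) * ζm ^ (J z)
      else ∑ w ∈ G, (ε' (ζq ^ b * w) : ℂ) * w with hcdef
    -- split the total sum
    have hsplit : ∑ z ∈ E', (ε' z : ℂ) * z
        = ∑ z ∈ E, (ε' (φ z) : ℂ) * φ z
          + ∑ b ∈ Finset.Ico p q, ∑ w ∈ G, (ε' (ζq ^ b * w) : ℂ) * (ζq ^ b * w) := by
      rw [hE'def, Finset.sum_union hdisj1, Finset.sum_image hφinj,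
        Finset.sum_biUnion ?_]
      · congr 1
        refine Finset.sum_congr rfl fun b _ => ?_
        exact Finset.sum_image (fun w hw w' hw' h => hGinj b w hw w' hw' h)
      · intro b hb b' hb' hne
        exact hdisjpieces b hb b' hb' hne
    have hgE : ∑ z ∈ E, (ε' (φ z) : ℂ) * φ z = ∑ b ∈ Finset.range p, c b * ζq ^ b := by
      rw [← Finset.sum_fiberwise_of_maps_to (g := A) (t := Finset.range p)
        (fun z hz => Finset.mem_range.mpr (hdec1 z hz))]
      refine Finset.sum_congr rfl fun b hb => ?_
      have hbp : b < p := Finset.mem_range.mp hb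
      rw [hcdef]
      simp only [if_pos hbp, Finset.sum_mul]
      refine Finset.sum_congr rfl fun z hz => ?_
      obtain ⟨hzE, hzb⟩ := Finset.mem_filter.mp hz
      rw [hφz z hzE, hzb]
      ring
    have hgG : ∀ b ∈ Finset.Ico p q,
        ∑ w ∈ G, (ε' (ζq ^ b * w) : ℂ) * (ζq ^ b * w) = c b * ζq ^ b := by
      intro b hb
      have hbp : ¬ b < p := by
        have := (Finset.mem_Ico.mp hb).1
        omega
      rw [hcdef]
      simp only [if_neg hbp, Finset.sum_mul]
      refine Finset.sum_congr rfl fun w hw => ?_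
      ring
    have htot : ∑ b ∈ Finset.range q, c b * ζq ^ b = 0 := by
      rw [Finset.range_eq_Ico,
        ← Finset.sum_Ico_consecutive (fun b => c b * ζq ^ b) (Nat.zero_le p) hpq.le,
        ← Finset.range_eq_Ico, ← hgE, ← Finset.sum_congr rfl hgG, ← hsplit]
      exact hsum'
    -- membership in the span
    have hcspan : ∀ b, b < q → c b ∈ Submodule.span ℤ
        (Set.range fun k : ℕ => ζ ^ (q * k)) := by
      intro b hb
      rw [hcdef]
      by_cases hbp : b < p
      · simp only [if_pos hbp]
        refine Submodule.sum_mem _ fun z hz => ?_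
        rw [show ((ε' (φ z) : ℂ)) * ζm ^ (J z) = (ε' (φ z)) • (ζm ^ (J z)) from
          (zsmul_eq_mul _ _).symm]
        exact Submodule.smul_mem _ _ (Submodule.subset_span
          ⟨J z, show ζ ^ (q * J z) = ζm ^ J z from by rw [hζmdef, ← pow_mul]⟩)
      · simp only [if_neg hbp]
        refine Submodule.sum_mem _ fun w hw => ?_
        obtain ⟨i, hi, hiw⟩ := hζm.eq_pow_of_pow_eq_one (hwGpow w hw)
        have hterm : ((ε' (ζq ^ b * w) : ℂ)) * w = (ε' (ζq ^ b * w)) • (ζm ^ i) := by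
          rw [zsmul_eq_mul, hiw]
        rw [hterm]
        exact Submodule.smul_mem _ _ (Submodule.subset_span
          ⟨i, show ζ ^ (q * i) = ζm ^ i from by rw [hζmdef, ← pow_mul]⟩)
    -- all fiber sums are equal
    have hceq : ∀ b, b < q → ∀ b', b' < q → c b = c b' := by
      refine aux_lemmaA q m hq hm0 hqm c hcspan ?_
      rw [← htot]
      refine Finset.sum_congr rfl fun b _ => ?_
      rw [hζqdef, ← pow_mul]
    -- the relation among elements of E
    have hErelsum : ∑ z ∈ E, (ε' (φ z) : ℂ) * z = ∑ b ∈ Finset.range p, c b * μp ^ b := by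
      rw [← Finset.sum_fiberwise_of_maps_to (g := A) (t := Finset.range p)
        (fun z hz => Finset.mem_range.mpr (hdec1 z hz))]
      refine Finset.sum_congr rfl fun b hb => ?_
      have hbp : b < p := Finset.mem_range.mp hb
      rw [hcdef]
      simp only [if_pos hbp, Finset.sum_mul]
      refine Finset.sum_congr rfl fun z hz => ?_
      obtain ⟨hzE, hzb⟩ := Finset.mem_filter.mp hz
      rw [mul_assoc, mul_comm ((ζm : ℂ) ^ J z) (μp ^ b), ← hzb, ← hzdec z hzE]
    have hErel0 : ∑ z ∈ E, (ε' (φ z) : ℂ) * z = 0 := by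
      rw [hErelsum]
      have hstep : ∀ b ∈ Finset.range p, c b * μp ^ b = c 0 * μp ^ b := fun b hb => by
        rw [hceq b (lt_trans (Finset.mem_range.mp hb) hpq) 0 hq.pos]
      rw [Finset.sum_congr rfl hstep, ← Finset.mul_sum, hμp.geom_sum_eq_zero hp.one_lt,
        mul_zero]
    have hE0 : ∀ z ∈ E, ε' (φ z) = 0 := by
      have := hEqi E (fun x => ε' (φ x)) (Set.Subset.refl _)
        (fun z _ => hval' (φ z)) hErel0
      exact this
    have hc0 : c 0 = 0 := by
      rw [hcdef]
      simp only [if_pos hp.pos]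
      refine Finset.sum_eq_zero fun z hz => ?_
      rw [hE0 z (Finset.mem_filter.mp hz).1]
      simp
    have hcall : ∀ b, b < q → c b = 0 := fun b hb => (hceq b hb 0 hq.pos).trans hc0
    -- the relations among copies of G
    have hG0 : ∀ b ∈ Finset.Ico p q, ∀ w ∈ G, ε' (ζq ^ b * w) = 0 := by
      intro b hb
      have hbp : ¬ b < p := by
        have := (Finset.mem_Ico.mp hb).1
        omega
      have hGrel : ∑ w ∈ G, ((fun x => ε' (ζq ^ b * x)) w : ℂ) * w = 0 := by
        have := hcall b (Finset.mem_Ico.mp hb).2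
        rw [hcdef] at this
        simp only [if_neg hbp] at this
        exact this
      exact hGqi G (fun x => ε' (ζq ^ b * x)) (Set.Subset.refl _)
        (fun w _ => hval' (ζq ^ b * w)) hGrel
    -- conclude
    have hall : ∀ x ∈ E', ε' x = 0 := by
      intro x hx
      rcases Finset.mem_union.mp hx with h | h
      · obtain ⟨z, hz, rfl⟩ := Finset.mem_image.mp h
        exact hE0 z hz
      · obtain ⟨b, hb, hxb⟩ := Finset.mem_biUnion.mp h
        obtain ⟨w, hw, rfl⟩ := Finset.mem_image.mp hxb
        exact hG0 b hb w hw
    intro z hz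
    have h0 := hall z (hsE' hz)
    rw [hε'def] at h0
    simpa [hz] using h0
  -- final counting
  have hfinal : E'.card ≤ Psi (q * m) := le_psi (q * m) hqm0 E' hE'root hE'qi
  calc (q - 1) * Psi m + Δ = ((p - 1) * Psi m + Δ) + (q - p) * Psi m := by
        have h1 : q - 1 = (p - 1) + (q - p) := by omega
        rw [h1, add_mul]
        ring
    _ ≤ Psi n + (q - p) * Psi m := Nat.add_le_add_right hΨ _
    _ = E.card + (q - p) * G.card := by rw [hEcard, hGcard]
    _ = E'.card := hE'card.symm
    _ ≤ Psi (q * m) := hfinal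
end
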